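/- arXiv:2101.01778 — 7 statements merged into one kernel-verified Lean document; each statement's English description precedes it below -/
import Mathlib

section
/- For every γ ∈ [0,1], every choice of parameters p_0,p_1,p_2,p_3 ∈ [0,1], and every site x ∈ ℤ, the supremum over all configurations η ∈ Σ = {0,1}^ℤ of |γ[c'(x,η) − c'(x,η_{x+1})] + (1−γ)[c(x,η) − c(x,η_{x+1})]| equals max(|γ/2 + (1−γ)(p_0 − p_1)|, |γ/2 + (1−γ)(p_2 − p_3)|). -/
/-- Configuration flipped at a single site. -/
def flipAt (η : ℤ → Bool) (x : ℤ) : ℤ → Bool := Function.update η x (!η x)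

/-- Game A' flip rate. -/
noncomputable def cA (x : ℤ) (η : ℤ → Bool) : ℝ :=
  (1 / 2) * ((if η x = η (x + 1) then (1 : ℝ) else 0) +
    (if η x = η (x - 1) then (1 : ℝ) else 0))

/-- `pSel p₀ p₁ p₂ p₃ a b = p_{2a+b}`. -/
def pSel (p₀ p₁ p₂ p₃ : ℝ) (a b : Bool) : ℝ :=
  match a, b with
  | false, false => p₀
  | false, true  => p₁
  | true,  false => p₂
  | true,  true  => p₃

/-- Game B flip rate. -/
def cB (p₀ p₁ p₂ p₃ : ℝ) (x : ℤ) (η : ℤ → Bool) : ℝ :=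
  if η x then 1 - pSel p₀ p₁ p₂ p₃ (η (x - 1)) (η (x + 1))
  else pSel p₀ p₁ p₂ p₃ (η (x - 1)) (η (x + 1))

lemma val_eq (γ p₀ p₁ p₂ p₃ : ℝ) (x : ℤ) (η : ℤ → Bool) :
    |γ * (cA x η - cA x (flipAt η (x + 1))) +
        (1 - γ) * (cB p₀ p₁ p₂ p₃ x η - cB p₀ p₁ p₂ p₃ x (flipAt η (x + 1)))| =
      if η (x - 1) then |γ / 2 + (1 - γ) * (p₂ - p₃)|
      else |γ / 2 + (1 - γ) * (p₀ - p₁)| := by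
  have hx : x ≠ x + 1 := by omega
  have hx' : x - 1 ≠ x + 1 := by omega
  unfold flipAt cA cB
  rw [Function.update_of_ne hx, Function.update_of_ne hx', Function.update_self]
  rcases ha : η (x - 1) <;> rcases hs : η x <;> rcases hb : η (x + 1) <;>
    simp only [ha, hs, hb] <;>
    norm_num [pSel] <;>
    first
      | (congr 1; ring1)
      | (rw [← abs_neg]; congr 1; ring1)

/-- For `γ ∈ [0,1]`, `p₀,p₁,p₂,p₃ ∈ [0,1]` and any site `x`, the supremum over all
configurations `η` of `|γ[c'(x,η)-c'(x,η_{x+1})] + (1-γ)[c(x,η)-c(x,η_{x+1})]|`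
equals `max(|γ/2+(1-γ)(p₀-p₁)|, |γ/2+(1-γ)(p₂-p₃)|)`. -/
theorem sup_right_flip (γ : ℝ) (hγ : γ ∈ Set.Icc (0 : ℝ) 1)
    (p₀ p₁ p₂ p₃ : ℝ)
    (h₀ : p₀ ∈ Set.Icc (0 : ℝ) 1) (h₁ : p₁ ∈ Set.Icc (0 : ℝ) 1)
    (h₂ : p₂ ∈ Set.Icc (0 : ℝ) 1) (h₃ : p₃ ∈ Set.Icc (0 : ℝ) 1)
    (x : ℤ) :
    IsLUB (Set.range fun η : ℤ → Bool =>
        |γ * (cA x η - cA x (flipAt η (x + 1))) +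
          (1 - γ) * (cB p₀ p₁ p₂ p₃ x η - cB p₀ p₁ p₂ p₃ x (flipAt η (x + 1)))|)
      (max |γ / 2 + (1 - γ) * (p₀ - p₁)| |γ / 2 + (1 - γ) * (p₂ - p₃)|) := by
  constructor
  · rintro _ ⟨η, rfl⟩
    simp only [val_eq]
    split
    · exact le_max_right _ _
    · exact le_max_left _ _
  · intro b hb
    have hA := hb ⟨fun _ => false, rfl⟩
    have hB := hb ⟨fun _ => true, rfl⟩
    simp only [val_eq] at hA hB
    simp only [if_false, if_true] at hA hB
    exact max_le hA hB
end

section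
/- For every γ ∈ [0,1], every choice of parameters p_0,p_1,p_2,p_3 ∈ [0,1], and every site x ∈ ℤ, the supremum over all configurations η ∈ Σ = {0,1}^ℤ of |γ[c'(x,η) − c'(x,η_{x−1})] + (1−γ)[c(x,η) − c(x,η_{x−1})]| equals max(|γ/2 + (1−γ)(p_0 − p_2)|, |γ/2 + (1−γ)(p_1 − p_3)|). -/
lemma left_flip_val (γ p₀ p₁ p₂ p₃ : ℝ) (x : ℤ) (η : ℤ → Bool) :
    |γ * (cA x η - cA x (flipAt η (x - 1))) +
        (1 - γ) * (cB p₀ p₁ p₂ p₃ x η - cB p₀ p₁ p₂ p₃ x (flipAt η (x - 1)))| =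
    |γ / 2 + (1 - γ) * (if η (x + 1) then p₁ - p₃ else p₀ - p₂)| := by
  have hx : (x : ℤ) ≠ x - 1 := by omega
  have hx1 : (x + 1 : ℤ) ≠ x - 1 := by omega
  have e1 : flipAt η (x - 1) x = η x := Function.update_of_ne hx _ _
  have e2 : flipAt η (x - 1) (x + 1) = η (x + 1) := Function.update_of_ne hx1 _ _
  have e3 : flipAt η (x - 1) (x - 1) = !η (x - 1) := Function.update_self _ _ _
  rw [show |γ / 2 + (1 - γ) * (if η (x + 1) then p₁ - p₃ else p₀ - p₂)| =
      |(if η x = η (x - 1) then 1 else -1 : ℝ) *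
        (γ / 2 + (1 - γ) * (if η (x + 1) then p₁ - p₃ else p₀ - p₂))| by
    rcases eq_or_ne (η x) (η (x - 1)) with h | h
    · simp [h]
    · simp only [h, if_false]
      rw [← abs_neg]
      ring_nf]
  congr 1
  simp only [cA, cB, e1, e2, e3]
  rcases hb : η x with _ | _ <;> rcases ha : η (x - 1) with _ | _ <;>
    rcases hc : η (x + 1) with _ | _ <;> simp [pSel] <;> ring

/-- For `γ ∈ [0,1]`, `p₀,p₁,p₂,p₃ ∈ [0,1]` and any site `x`, the supremum over all
configurations `η` of `|γ[c'(x,η)-c'(x,η_{x-1})] + (1-γ)[c(x,η)-c(x,η_{x-1})]|`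
equals `max(|γ/2+(1-γ)(p₀-p₂)|, |γ/2+(1-γ)(p₁-p₃)|)`. -/
theorem sup_left_flip (γ : ℝ) (hγ : γ ∈ Set.Icc (0 : ℝ) 1)
    (p₀ p₁ p₂ p₃ : ℝ)
    (h₀ : p₀ ∈ Set.Icc (0 : ℝ) 1) (h₁ : p₁ ∈ Set.Icc (0 : ℝ) 1)
    (h₂ : p₂ ∈ Set.Icc (0 : ℝ) 1) (h₃ : p₃ ∈ Set.Icc (0 : ℝ) 1)
    (x : ℤ) :
    IsLUB (Set.range fun η : ℤ → Bool =>
        |γ * (cA x η - cA x (flipAt η (x - 1))) +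
          (1 - γ) * (cB p₀ p₁ p₂ p₃ x η - cB p₀ p₁ p₂ p₃ x (flipAt η (x - 1)))|)
      (max |γ / 2 + (1 - γ) * (p₀ - p₂)| |γ / 2 + (1 - γ) * (p₁ - p₃)|) := by
  constructor
  · rintro v ⟨η, rfl⟩
    simp only [left_flip_val]
    rcases hc : η (x + 1) with _ | _ <;> simp [le_max_left, le_max_right]
  · intro b hb
    have ht : ∀ η : ℤ → Bool,
        |γ * (cA x η - cA x (flipAt η (x - 1))) +
          (1 - γ) * (cB p₀ p₁ p₂ p₃ x η - cB p₀ p₁ p₂ p₃ x (flipAt η (x - 1)))| ≤ b :=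
      fun η => hb ⟨η, rfl⟩
    have h0 := ht (fun _ => false)
    have h1 := ht (fun _ => true)
    rw [left_flip_val] at h0 h1
    simp only [if_true, if_false] at h0 h1
    exact max_le h0 h1
end

section
/- The 4-dimensional Lebesgue measure of the set of (p_0,p_1,p_2,p_3) ∈ [0,1]^4 satisfying max(|1/4 + (1/2)(p_0 − p_1)|, |1/4 + (1/2)(p_2 − p_3)|) + max(|1/4 + (1/2)(p_0 − p_2)|, |1/4 + (1/2)(p_1 − p_3)|) < 1 equals 5/6. (This is the volume of the parameter region where the ergodicity condition of Theorem 1 holds with γ = 1/2.) -/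
/-!
Expanding `max a b + max c d < 1` and `|x| + |y| < 1` into conjunctions of linear inequalities, the
ergodicity condition becomes sixteen linear inequalities, which on the unit cube are together
equivalent to the two inequalities `2 p₀ - p₁ - p₂ < 1` and `p₁ + p₂ < 1 + 2 p₃`. The two complementary
corners of the cube meet only where `p₀ = 1`, and `p ↦ (1 - p₃, 1 - p₂, 1 - p₁, 1 - p₀)` exchanges
them, so the region has volume `1 - 2 v`, with `v` the volume of `{1 ≤ 2 p₀ - p₁ - p₂}` in the cube.
Slicing by `p₃` and then by `p₀` exhibits this corner as a tetrahedron whose sections are right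
isosceles triangles of leg `2 p₀ - 1`, whence `v = ∫_{1/2}^1 (2x - 1)² / 2 dx = 1/12`.
-/

open MeasureTheory Set

theorem max_add_max_lt_iff {α : Type*} [LinearOrder α] [Add α] [AddLeftMono α] [AddRightMono α]
    {a b c d e : α} :
    max a b + max c d < e ↔ (a + c < e ∧ b + c < e) ∧ (a + d < e ∧ b + d < e) := by
  simp only [max_add, add_max, max_lt_iff]

theorem abs_add_abs_lt_iff {α : Type*} [AddCommGroup α] [LinearOrder α] [IsOrderedAddMonoid α]
    {a b c : α} :
    |a| + |b| < c ↔ (a + b < c ∧ -a + b < c) ∧ (a + -b < c ∧ -a + -b < c) := by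
  simp only [abs_eq_max_neg, max_add_max_lt_iff]

theorem ergodicity_condition_iff {p₀ p₁ p₂ p₃ : ℝ} (h₀ : p₀ ∈ Icc (0 : ℝ) 1)
    (h₁ : p₁ ∈ Icc (0 : ℝ) 1) (h₂ : p₂ ∈ Icc (0 : ℝ) 1) (h₃ : p₃ ∈ Icc (0 : ℝ) 1) :
    max |1 / 4 + (1 / 2) * (p₀ - p₁)| |1 / 4 + (1 / 2) * (p₂ - p₃)| +
        max |1 / 4 + (1 / 2) * (p₀ - p₂)| |1 / 4 + (1 / 2) * (p₁ - p₃)| < 1 ↔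
      2 * p₀ - p₁ - p₂ < 1 ∧ p₁ + p₂ < 1 + 2 * p₃ := by
  obtain ⟨_, _⟩ := h₀
  obtain ⟨_, _⟩ := h₁
  obtain ⟨_, _⟩ := h₂
  obtain ⟨_, _⟩ := h₃
  simp only [max_add_max_lt_iff, abs_add_abs_lt_iff]
  constructor
  · rintro ⟨⟨⟨⟨hA, -⟩, -⟩, -⟩, -, ⟨hB, -⟩, -⟩
    constructor <;> linarith
  · rintro ⟨hA, hB⟩
    refine ⟨⟨⟨?_, ?_⟩, ?_, ?_⟩, ⟨?_, ?_⟩, ?_, ?_⟩ <;> constructor <;> linarith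

theorem setLIntegral_Icc_ofReal_eq_ofReal_integral {f : ℝ → ℝ} {a b : ℝ} (hab : a ≤ b)
    (hf : ContinuousOn f (Icc a b)) (hf₀ : ∀ x ∈ Icc a b, 0 ≤ f x) :
    ∫⁻ x in Icc a b, ENNReal.ofReal (f x) = ENNReal.ofReal (∫ x in a..b, f x) := by
  rw [intervalIntegral.integral_of_le hab, ← integral_Icc_eq_integral_Ioc,
    ofReal_integral_eq_lintegral_ofReal hf.integrableOn_Icc
      ((ae_restrict_iff' measurableSet_Icc).2 (Filter.Eventually.of_forall hf₀))]

theorem volume_setOf_removeNth {n : ℕ} (i : Fin (n + 1)) {I : Set ℝ} (hI : MeasurableSet I)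
    {T : ℝ → Set (Fin n → ℝ)} (hs : MeasurableSet {q : ℝ × (Fin n → ℝ) | q.1 ∈ I ∧ q.2 ∈ T q.1}) :
    volume {p : Fin (n + 1) → ℝ | p i ∈ I ∧ i.removeNth p ∈ T (p i)} = ∫⁻ x in I, volume (T x) := by
  refine ((volume_preserving_piFinSuccAbove (fun _ => ℝ) i).measure_preimage_equiv
    {q : ℝ × (Fin n → ℝ) | q.1 ∈ I ∧ q.2 ∈ T q.1}).trans ?_
  rw [Measure.volume_eq_prod, Measure.prod_apply hs, ← lintegral_indicator hI]
  congr with x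
  classical
  by_cases hx : x ∈ I <;> simp [hx, preimage]

theorem volume_setOf_apply_zero_mem (s : Set ℝ) :
    volume {z : Fin 1 → ℝ | z 0 ∈ s} = volume s :=
  (volume_preserving_funUnique (Fin 1) ℝ).measure_preimage_equiv s

theorem volume_triangle {t : ℝ} (ht : 0 ≤ t) :
    volume {y : Fin 2 → ℝ | 0 ≤ y 0 ∧ 0 ≤ y 1 ∧ y 0 + y 1 ≤ t} = ENNReal.ofReal (t ^ 2 / 2) := by
  have hslices : {y : Fin 2 → ℝ | 0 ≤ y 0 ∧ 0 ≤ y 1 ∧ y 0 + y 1 ≤ t} =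
      {y : Fin 2 → ℝ | y 0 ∈ Icc 0 t ∧
        Fin.removeNth 0 y ∈ {z : Fin 1 → ℝ | z 0 ∈ Icc 0 (t - y 0)}} := by
    ext y
    simp only [mem_ofPred_eq, mem_Icc, Fin.removeNth_zero, Fin.tail, Fin.succ_zero_eq_one]
    constructor
    · rintro ⟨h₀, h₁, h⟩
      exact ⟨⟨h₀, by linarith⟩, h₁, by linarith⟩
    · rintro ⟨⟨h₀, -⟩, h₁, h⟩
      exact ⟨h₀, h₁, by linarith⟩
  rw [hslices, volume_setOf_removeNth 0 measurableSet_Icc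
    (T := fun x => {z : Fin 1 → ℝ | z 0 ∈ Icc 0 (t - x)})
    (by simp only [mem_ofPred_eq, mem_Icc]; measurability)]
  simp_rw [volume_setOf_apply_zero_mem, Real.volume_Icc, sub_zero]
  rw [setLIntegral_Icc_ofReal_eq_ofReal_integral ht (by fun_prop) (fun x hx => by linarith [hx.2]),
    intervalIntegral.integral_comp_sub_left (fun y => y)]
  simp

theorem volume_tetrahedron :
    volume {x : Fin 3 → ℝ | x 0 ≤ 1 ∧ 0 ≤ x 1 ∧ 0 ≤ x 2 ∧ x 1 + x 2 ≤ 2 * x 0 - 1} =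
      ENNReal.ofReal (1 / 12) := by
  have hslices : {x : Fin 3 → ℝ | x 0 ≤ 1 ∧ 0 ≤ x 1 ∧ 0 ≤ x 2 ∧ x 1 + x 2 ≤ 2 * x 0 - 1} =
      {x : Fin 3 → ℝ | x 0 ∈ Icc (1 / 2) 1 ∧ Fin.removeNth 0 x ∈
        {y : Fin 2 → ℝ | 0 ≤ y 0 ∧ 0 ≤ y 1 ∧ y 0 + y 1 ≤ 2 * x 0 - 1}} := by
    ext x
    simp only [mem_ofPred_eq, mem_Icc, Fin.removeNth_zero, Fin.tail, Fin.succ_zero_eq_one,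
      Fin.succ_one_eq_two]
    constructor
    · rintro ⟨h₀, h₁, h₂, h⟩
      exact ⟨⟨by linarith, h₀⟩, h₁, h₂, h⟩
    · rintro ⟨⟨-, h₀⟩, h₁, h₂, h⟩
      exact ⟨h₀, h₁, h₂, h⟩
  rw [hslices, volume_setOf_removeNth 0 measurableSet_Icc
    (T := fun x => {y : Fin 2 → ℝ | 0 ≤ y 0 ∧ 0 ≤ y 1 ∧ y 0 + y 1 ≤ 2 * x - 1})
    (by simp only [mem_ofPred_eq, mem_Icc]; measurability)]
  rw [setLIntegral_congr_fun measurableSet_Icc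
      (fun x hx => volume_triangle (t := 2 * x - 1) (by linarith [hx.1])),
    setLIntegral_Icc_ofReal_eq_ofReal_integral (by norm_num) (by fun_prop)
      (fun x _ => by positivity),
    intervalIntegral.integral_div,
    intervalIntegral.integral_comp_mul_sub (fun x => x ^ 2) two_ne_zero]
  norm_num

theorem volume_cube_inter_one_le_two_mul_sub :
    volume {p : Fin 4 → ℝ | (∀ i, p i ∈ Icc (0 : ℝ) 1) ∧ 1 ≤ 2 * p 0 - p 1 - p 2} =
      ENNReal.ofReal (1 / 12) := by
  have hslices : {p : Fin 4 → ℝ | (∀ i, p i ∈ Icc (0 : ℝ) 1) ∧ 1 ≤ 2 * p 0 - p 1 - p 2} =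
      {p : Fin 4 → ℝ | p 3 ∈ Icc 0 1 ∧ Fin.removeNth 3 p ∈
        {x : Fin 3 → ℝ | x 0 ≤ 1 ∧ 0 ≤ x 1 ∧ 0 ≤ x 2 ∧ x 1 + x 2 ≤ 2 * x 0 - 1}} := by
    ext p
    simp only [mem_ofPred_eq, mem_Icc, Fin.forall_fin_succ, IsEmpty.forall_iff, and_true,
      Fin.removeNth_apply, Fin.succAbove, Fin.reduceSucc, Fin.reduceCastSucc, Fin.reduceLT,
      ↓reduceIte]
    constructor
    · rintro ⟨⟨⟨-, h₀⟩, ⟨h₁, -⟩, ⟨h₂, -⟩, h₃⟩, h⟩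
      exact ⟨h₃, h₀, h₁, h₂, by linarith⟩
    · rintro ⟨h₃, h₀, h₁, h₂, h⟩
      exact ⟨⟨⟨by linarith, h₀⟩, ⟨h₁, by linarith⟩, ⟨h₂, by linarith⟩, h₃⟩, by linarith⟩
  rw [hslices, volume_setOf_removeNth 3 measurableSet_Icc
    (T := fun _ => {x : Fin 3 → ℝ | x 0 ≤ 1 ∧ 0 ≤ x 1 ∧ 0 ≤ x 2 ∧ x 1 + x 2 ≤ 2 * x 0 - 1})
    (by simp only [mem_ofPred_eq, mem_Icc]; measurability),
    setLIntegral_const, volume_tetrahedron, Real.volume_Icc]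
  simp

theorem measurableSet_cube_inter_le {ι : Type*} [Countable ι] {f g : (ι → ℝ) → ℝ}
    (hf : Measurable f) (hg : Measurable g) :
    MeasurableSet {p : ι → ℝ | (∀ i, p i ∈ Icc (0 : ℝ) 1) ∧ f p ≤ g p} := by
  rw [ofPred_and, ofPred_forall]
  exact (MeasurableSet.iInter fun i => measurableSet_Icc.preimage (measurable_pi_apply i)).inter
    (measurableSet_le hf hg)

theorem measurePreserving_one_sub_rev {n : ℕ} :
    MeasurePreserving (fun (p : Fin n → ℝ) i => 1 - p (Fin.rev i)) := by
  convert volume_preserving_arrowCongr' Fin.revPerm (MeasurableEquiv.subLeft (1 : ℝ))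
    (Measure.measurePreserving_sub_left volume 1)
  simp only [MeasurableEquiv.arrowCongr', Equiv.arrowCongr', MeasurableEquiv.coe_mk,
    Equiv.arrowCongr_apply, EquivLike.coe_coe, Fin.revPerm_symm, Function.comp_apply,
    Fin.revPerm_apply]
  rfl

theorem volume_cube_inter_one_add_two_mul_le :
    volume {p : Fin 4 → ℝ | (∀ i, p i ∈ Icc (0 : ℝ) 1) ∧ 1 + 2 * p 3 ≤ p 1 + p 2} =
      ENNReal.ofReal (1 / 12) := by
  have hreflect : {p : Fin 4 → ℝ | (∀ i, p i ∈ Icc (0 : ℝ) 1) ∧ 1 + 2 * p 3 ≤ p 1 + p 2} =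
      (fun (p : Fin 4 → ℝ) i => 1 - p (Fin.rev i)) ⁻¹'
        {p | (∀ i, p i ∈ Icc (0 : ℝ) 1) ∧ 1 ≤ 2 * p 0 - p 1 - p 2} := by
    ext p
    simp only [mem_preimage, mem_ofPred_eq, mem_Icc, Fin.forall_fin_succ, IsEmpty.forall_iff,
      and_true, Fin.reduceSucc, Fin.reduceRev]
    constructor <;> rintro ⟨⟨⟨_, _⟩, ⟨_, _⟩, ⟨_, _⟩, _, _⟩, _⟩ <;>
      refine ⟨⟨⟨?_, ?_⟩, ⟨?_, ?_⟩, ⟨?_, ?_⟩, ?_, ?_⟩, ?_⟩ <;> linarith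
  rw [hreflect, measurePreserving_one_sub_rev.measure_preimage
    (measurableSet_cube_inter_le (by fun_prop) (by fun_prop)).nullMeasurableSet,
    volume_cube_inter_one_le_two_mul_sub]

theorem volume_union_corners :
    volume ({p : Fin 4 → ℝ | (∀ i, p i ∈ Icc (0 : ℝ) 1) ∧ 1 ≤ 2 * p 0 - p 1 - p 2} ∪
      {p | (∀ i, p i ∈ Icc (0 : ℝ) 1) ∧ 1 + 2 * p 3 ≤ p 1 + p 2}) = ENNReal.ofReal (1 / 6) := by
  rw [measure_union₀ (measurableSet_cube_inter_le (by fun_prop) (by fun_prop)).nullMeasurableSet,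
    volume_cube_inter_one_le_two_mul_sub,
    volume_cube_inter_one_add_two_mul_le, ← ENNReal.ofReal_add (by norm_num) (by norm_num)]
  · norm_num
  · exact measure_mono_null (fun p ⟨⟨hp, _⟩, _, _⟩ => show p 0 = 1 by linarith [(hp 0).2, (hp 3).1])
      (Measure.pi_hyperplane _ 0 1)

theorem volume_unitCube {ι : Type*} [Fintype ι] :
    volume {p : ι → ℝ | ∀ i, p i ∈ Icc (0 : ℝ) 1} = 1 := by
  have : {p : ι → ℝ | ∀ i, p i ∈ Icc (0 : ℝ) 1} = univ.pi fun _ => Icc 0 1 := by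
    ext; simp only [mem_ofPred_eq, mem_univ_pi]
  rw [this, volume_pi_pi]
  simp

theorem ergodicity_region_eq_sdiff :
    {p : Fin 4 → ℝ | (∀ i, p i ∈ Icc (0 : ℝ) 1) ∧
      max |1 / 4 + (1 / 2) * (p 0 - p 1)| |1 / 4 + (1 / 2) * (p 2 - p 3)| +
        max |1 / 4 + (1 / 2) * (p 0 - p 2)| |1 / 4 + (1 / 2) * (p 1 - p 3)| < 1} =
      {p : Fin 4 → ℝ | ∀ i, p i ∈ Icc (0 : ℝ) 1} \
        ({p | (∀ i, p i ∈ Icc (0 : ℝ) 1) ∧ 1 ≤ 2 * p 0 - p 1 - p 2} ∪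
          {p | (∀ i, p i ∈ Icc (0 : ℝ) 1) ∧ 1 + 2 * p 3 ≤ p 1 + p 2}) := by
  ext p
  simp only [mem_sdiff, mem_union, mem_ofPred_eq, not_or, not_and, not_le]
  refine ⟨fun ⟨hp, h⟩ => ?_, fun ⟨hp, hA, hB⟩ => ⟨hp, ?_⟩⟩
  · obtain ⟨hA, hB⟩ := (ergodicity_condition_iff (hp 0) (hp 1) (hp 2) (hp 3)).1 h
    exact ⟨hp, fun _ => hA, fun _ => hB⟩
  · exact (ergodicity_condition_iff (hp 0) (hp 1) (hp 2) (hp 3)).2 ⟨hA hp, hB hp⟩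

/-- The Lebesgue volume of the set of parameters `(p₀,p₁,p₂,p₃) ∈ [0,1]⁴` satisfying the
ergodicity condition of Theorem 1 with `γ = 1/2` is `5/6`. -/
theorem volume_ergodicity_region_four_params :
    volume {p : Fin 4 → ℝ | (∀ i, p i ∈ Set.Icc (0 : ℝ) 1) ∧
      max |1 / 4 + (1 / 2) * (p 0 - p 1)| |1 / 4 + (1 / 2) * (p 2 - p 3)| +
        max |1 / 4 + (1 / 2) * (p 0 - p 2)| |1 / 4 + (1 / 2) * (p 1 - p 3)| < 1} =
      5 / 6 := by
  rw [ergodicity_region_eq_sdiff, measure_sdiff, volume_unitCube, volume_union_corners,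
    ← ENNReal.ofReal_one, ← ENNReal.ofReal_sub _ (by norm_num)]
  · rw [show (1 : ℝ) - 1 / 6 = 5 / 6 by norm_num, ENNReal.ofReal_div_of_pos (by norm_num)]
    norm_num
  · exact union_subset (fun _ hp => hp.1) (fun _ hp => hp.1)
  · exact ((measurableSet_cube_inter_le (by fun_prop) (by fun_prop)).union
      (measurableSet_cube_inter_le (by fun_prop) (by fun_prop))).nullMeasurableSet
  · exact volume_union_corners ▸ ENNReal.ofReal_ne_top
end

section
/- For γ ∈ (0,1), let V(γ) be the 3-dimensional Lebesgue measure of the set of (p_0,p_1,p_3) ∈ [0,1]^3 satisfying 2·max(|γ/2 + (1−γ)(p_0 − p_1)|, |γ/2 + (1−γ)(p_1 − p_3)|) < 1. Then V(γ) = 3/4 if and only if γ ≥ 1/3. -/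
/-!
Writing `a = p₀ - p₁` and `b = p₁ - p₃` (`p 0 - p 1` and `p 1 - p 2` below), the condition says that `a` and `b` lie in the interval
`(-(1 + γ) / (2 (1 - γ)), 1 / 2)`. Inside the cube the increments are at least `-1`, with equality
only on a null set, and the left end point is `≤ -1` exactly when `γ ≥ 1/3`. So for `γ ≥ 1/3` the
set agrees up to a null set with the part of the cube where `a, b < 1/2`, whose volume is
`∫₀¹ (1 - |x - 1/2|) dx = 3/4` (slice at `x = p₁`); for `γ < 1/3` a small ball near
`(0, 1, 3/4)` lies in that part of the cube but outside the set.
-/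

open MeasureTheory Set Topology

lemma measure_lt_of_sdiff_mem_nhds {X : Type*} [TopologicalSpace X] [MeasurableSpace X]
    [OpensMeasurableSpace X] {μ : Measure X} [μ.IsOpenPosMeasure] {s t : Set X} {x : X}
    (hst : s ⊆ t) (hx : t \ s ∈ 𝓝 x) (ht : μ t ≠ ⊤) : μ s < μ t := by
  set U := interior (t \ s)
  have hUt : U ⊆ t := interior_subset.trans sdiff_subset
  have hU : μ U ≠ 0 := isOpen_interior.measure_ne_zero μ ⟨x, mem_interior_iff_mem_nhds.2 hx⟩
  calc μ s ≤ μ (t \ U) := measure_mono fun p hp =>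
          ⟨hst hp, fun hpU => (interior_subset hpU : p ∈ t \ s).2 hp⟩
    _ = μ t - μ U := measure_sdiff hUt isOpen_interior.nullMeasurableSet
          (ne_top_of_le_ne_top ht (measure_mono hUt))
    _ < μ t := ENNReal.sub_lt_self ht (ne_bot_of_le_ne_bot hU (measure_mono hUt)) hU

lemma volume_Icc_inter_Iio (a b c : ℝ) :
    volume (Icc a b ∩ Iio c) = ENNReal.ofReal (min b c - a) := by
  rw [← measure_congr (Ico_ae_eq_Icc.inter (ae_eq_refl (Iio c))), Ico_inter_Iio, Real.volume_Ico]

lemma volume_Icc_inter_Ioi (a b c : ℝ) :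
    volume (Icc a b ∩ Ioi c) = ENNReal.ofReal (b - max a c) := by
  rw [← measure_congr (Ioc_ae_eq_Icc.inter (ae_eq_refl (Ioi c))), Ioc_inter_Ioi, Real.volume_Ioc]

lemma integral_one_sub_abs_sub_half : ∫ x in (0 : ℝ)..1, (1 - |x - 1 / 2|) = 3 / 4 := by
  have hc : Continuous fun x : ℝ => 1 - |x - 1 / 2| := by fun_prop
  rw [← intervalIntegral.integral_add_adjacent_intervals (b := 1 / 2)
    (hc.intervalIntegrable _ _) (hc.intervalIntegrable _ _)]
  have h₁ : ∫ x in (0 : ℝ)..(1 / 2), (1 - |x - 1 / 2|) = ∫ x in (0 : ℝ)..(1 / 2), (x + 1 / 2) := by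
    refine intervalIntegral.integral_congr fun x hx => ?_
    rw [uIcc_of_le (by norm_num)] at hx
    rw [abs_of_nonpos (by linarith [hx.2])]; ring
  have h₂ : ∫ x in (1 / 2 : ℝ)..1, (1 - |x - 1 / 2|) = ∫ x in (1 / 2 : ℝ)..1, (3 / 2 - x) := by
    refine intervalIntegral.integral_congr fun x hx => ?_
    rw [uIcc_of_le (by norm_num)] at hx
    rw [abs_of_nonneg (by linarith [hx.1])]; ring
  rw [h₁, h₂, intervalIntegral.integral_sub intervalIntegrable_const
    intervalIntegral.intervalIntegrable_id]
  norm_num [integral_id]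

def cubeIncrementsLtHalf : Set (Fin 3 → ℝ) :=
  {p | (∀ i, p i ∈ Icc (0 : ℝ) 1) ∧ p 0 - p 1 < 1 / 2 ∧ p 1 - p 2 < 1 / 2}

lemma measurableSet_cubeIncrementsLtHalf : MeasurableSet cubeIncrementsLtHalf := by
  unfold cubeIncrementsLtHalf
  measurability

lemma volume_cubeIncrementsLtHalf_eq_lintegral :
    volume cubeIncrementsLtHalf =
      ∫⁻ x in Icc 0 1, volume (Icc (0 : ℝ) 1 ∩ Iio (x + 1 / 2)) *
        volume (Icc (0 : ℝ) 1 ∩ Ioi (x - 1 / 2)) := by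
  let e := MeasurableEquiv.piFinSuccAbove (fun _ : Fin 3 => ℝ) 1
  have hT : MeasurableSet (e.symm ⁻¹' cubeIncrementsLtHalf) :=
    e.symm.measurable measurableSet_cubeIncrementsLtHalf
  rw [← ((volume_preserving_piFinSuccAbove _ 1).symm e).measure_preimage_equiv,
    Measure.volume_eq_prod, Measure.prod_apply hT, ← lintegral_indicator measurableSet_Icc]
  congr 1
  ext x
  by_cases hx : x ∈ Icc (0 : ℝ) 1
  · have hslice : Prod.mk x ⁻¹' (e.symm ⁻¹' cubeIncrementsLtHalf) =
        univ.pi ![Icc 0 1 ∩ Iio (x + 1 / 2), Icc 0 1 ∩ Ioi (x - 1 / 2)] := by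
      ext v
      have hv : e.symm (x, v) = ![v 0, x, v 1] := by ext i; fin_cases i <;> rfl
      simp only [mem_preimage, hv, cubeIncrementsLtHalf, mem_ofPred_eq, mem_univ_pi, mem_Icc,
        mem_inter_iff, mem_Iio, mem_Ioi, Fin.forall_fin_succ, Fin.succ_zero_eq_one,
        Fin.succ_one_eq_two, IsEmpty.forall_iff, Matrix.cons_val_zero, Matrix.cons_val_one,
        Matrix.cons_val, Matrix.cons_val_succ, Matrix.cons_val_fin_one, hx.1, hx.2, and_true,
        true_and, sub_lt_iff_lt_add', add_comm _ (1 / 2 : ℝ)]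
      tauto
    rw [indicator_of_mem hx, hslice, volume_pi_pi, Fin.prod_univ_two]
    rfl
  · have hslice : Prod.mk x ⁻¹' (e.symm ⁻¹' cubeIncrementsLtHalf) = ∅ :=
      eq_empty_of_forall_notMem fun v hv => hx (hv.1 1)
    rw [indicator_of_notMem hx, hslice, measure_empty]

lemma volume_cubeIncrementsLtHalf : volume cubeIncrementsLtHalf = 3 / 4 := by
  have hslice : ∀ x ∈ Icc (0 : ℝ) 1, volume (Icc (0 : ℝ) 1 ∩ Iio (x + 1 / 2)) *
      volume (Icc (0 : ℝ) 1 ∩ Ioi (x - 1 / 2)) = ENNReal.ofReal (1 - |x - 1 / 2|) := by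
    intro x ⟨hx₀, hx₁⟩
    rw [volume_Icc_inter_Iio, volume_Icc_inter_Ioi,
      ← ENNReal.ofReal_mul (by simp only [sub_zero, le_min_iff]; constructor <;> linarith)]
    congr 1
    rcases le_total x (1 / 2) with hx | hx
    · rw [min_eq_right (by linarith), max_eq_left (by linarith), abs_of_nonpos (by linarith)]
      ring
    · rw [min_eq_left (by linarith), max_eq_right (by linarith), abs_of_nonneg (by linarith)]
      ring
  have hint : IntegrableOn (fun x : ℝ => 1 - |x - 1 / 2|) (Icc 0 1) :=
    (by fun_prop : Continuous fun x : ℝ => 1 - |x - 1 / 2|).integrableOn_Icc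
  have hnonneg : 0 ≤ᵐ[volume.restrict (Icc (0 : ℝ) 1)] fun x => 1 - |x - 1 / 2| := by
    filter_upwards [ae_restrict_mem measurableSet_Icc] with x ⟨hx₀, hx₁⟩
    simp only [Pi.zero_apply, sub_nonneg, abs_le]
    constructor <;> linarith
  rw [volume_cubeIncrementsLtHalf_eq_lintegral, setLIntegral_congr_fun measurableSet_Icc hslice,
    ← ofReal_integral_eq_lintegral_ofReal hint hnonneg, integral_Icc_eq_integral_Ioc,
    ← intervalIntegral.integral_of_le zero_le_one, integral_one_sub_abs_sub_half,
    ENNReal.ofReal_div_of_pos (by norm_num)]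
  norm_num

section
variable {γ x : ℝ}

lemma lt_half_of_abs_lt_half (hγ : γ < 1) (h : |γ / 2 + (1 - γ) * x| < 1 / 2) : x < 1 / 2 := by
  nlinarith [(abs_lt.1 h).2]

lemma abs_lt_half_of_neg_one_lt (hγ₀ : 1 / 3 ≤ γ) (hγ₁ : γ < 1) (hx₀ : -1 < x) (hx₁ : x < 1 / 2) :
    |γ / 2 + (1 - γ) * x| < 1 / 2 :=
  abs_lt.2 ⟨by nlinarith, by nlinarith⟩

lemma half_lt_abs_of_lt (hγ₀ : 0 ≤ γ) (hγ₁ : γ < 1 / 3) (hx : x < -1 + (1 - 3 * γ) / 2) :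
    1 / 2 < |γ / 2 + (1 - γ) * x| :=
  lt_abs.2 (Or.inr (by nlinarith))

end

def ergodicityCriterionSet (γ : ℝ) : Set (Fin 3 → ℝ) :=
  {p | (∀ i, p i ∈ Icc (0 : ℝ) 1) ∧
    2 * max |γ / 2 + (1 - γ) * (p 0 - p 1)| |γ / 2 + (1 - γ) * (p 1 - p 2)| < 1}

section
variable {γ : ℝ}

lemma ergodicityCriterionSet_subset (hγ : γ < 1) :
    ergodicityCriterionSet γ ⊆ cubeIncrementsLtHalf := by
  rintro p ⟨hcube, hmax⟩
  have h₀₁ := le_max_left |γ / 2 + (1 - γ) * (p 0 - p 1)| |γ / 2 + (1 - γ) * (p 1 - p 2)|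
  have h₁₂ := le_max_right |γ / 2 + (1 - γ) * (p 0 - p 1)| |γ / 2 + (1 - γ) * (p 1 - p 2)|
  exact ⟨hcube, lt_half_of_abs_lt_half hγ (by linarith),
    lt_half_of_abs_lt_half hγ (by linarith)⟩

lemma cubeIncrementsLtHalf_sdiff_subset (hγ₀ : 1 / 3 ≤ γ) (hγ₁ : γ < 1) :
    cubeIncrementsLtHalf \ ergodicityCriterionSet γ ⊆ {p | p 0 = 0} ∪ {p | p 1 = 0} := by
  rintro p ⟨⟨hcube, h₀₁, h₁₂⟩, hnot⟩
  by_contra hzero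
  simp only [mem_union, mem_ofPred_eq, not_or] at hzero
  have hp₀ : 0 < p 0 := (hcube 0).1.lt_of_ne' hzero.1
  have hp₁ : 0 < p 1 := (hcube 1).1.lt_of_ne' hzero.2
  have ha := abs_lt_half_of_neg_one_lt hγ₀ hγ₁ (by linarith [(hcube 1).2]) h₀₁
  have hb := abs_lt_half_of_neg_one_lt hγ₀ hγ₁ (by linarith [(hcube 2).2]) h₁₂
  exact hnot ⟨hcube, by linarith [max_lt ha hb]⟩

lemma volume_ergodicityCriterionSet_of_le (hγ₀ : 1 / 3 ≤ γ) (hγ₁ : γ < 1) :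
    volume (ergodicityCriterionSet γ) = 3 / 4 := by
  rw [← volume_cubeIncrementsLtHalf]
  refine measure_eq_measure_of_null_sdiff (ergodicityCriterionSet_subset hγ₁) ?_
  exact measure_mono_null (cubeIncrementsLtHalf_sdiff_subset hγ₀ hγ₁)
    (measure_union_null (Measure.pi_hyperplane _ 0 0) (Measure.pi_hyperplane _ 1 0))

lemma volume_ergodicityCriterionSet_lt (hγ₀ : 0 ≤ γ) (hγ₁ : γ < 1 / 3) :
    volume (ergodicityCriterionSet γ) < 3 / 4 := by
  -- On the ball below `p 0 - p 1 < 2ε - 1`, which is the threshold of `half_lt_abs_of_lt`.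
  set ε := (1 - 3 * γ) / 4 with hε_def
  have hε : 0 < ε / 2 := by rw [hε_def]; linarith
  have hball : Metric.ball ![ε / 2, 1 - ε / 2, 3 / 4] (ε / 2) ⊆
      cubeIncrementsLtHalf \ ergodicityCriterionSet γ := by
    intro p hp
    have hdist := (dist_pi_lt_iff hε).1 (Metric.mem_ball.1 hp)
    have hp₀ := hdist 0
    have hp₁ := hdist 1
    have hp₂ := hdist 2
    simp only [Real.dist_eq, abs_sub_lt_iff, Matrix.cons_val] at hp₀ hp₁ hp₂
    refine ⟨⟨fun i => ?_, by linarith, by linarith⟩, fun ⟨_, hmax⟩ => ?_⟩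
    · fin_cases i <;> dsimp <;> exact ⟨by linarith, by linarith⟩
    · have := half_lt_abs_of_lt hγ₀ hγ₁ (x := p 0 - p 1) (by linarith)
      linarith [le_max_left |γ / 2 + (1 - γ) * (p 0 - p 1)| |γ / 2 + (1 - γ) * (p 1 - p 2)|]
  rw [← volume_cubeIncrementsLtHalf]
  refine measure_lt_of_sdiff_mem_nhds (ergodicityCriterionSet_subset (by linarith))
    (Filter.mem_of_superset (Metric.ball_mem_nhds _ hε) hball) ?_
  rw [volume_cubeIncrementsLtHalf]
  exact ENNReal.div_ne_top (by norm_num) (by norm_num)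

end

/-- For `γ ∈ (0,1)`, the Lebesgue volume `V(γ)` of the set of `(p₀,p₁,p₃) ∈ [0,1]³` with
`2·max(|γ/2+(1-γ)(p₀-p₁)|, |γ/2+(1-γ)(p₁-p₃)|) < 1` equals `3/4` iff `γ ≥ 1/3`.
Here `p 0`, `p 1`, `p 2` play the roles of `p₀`, `p₁`, `p₃` respectively. -/
theorem volume_eq_three_quarters_iff (γ : ℝ) (hγ : γ ∈ Set.Ioo (0 : ℝ) 1) :
    volume {p : Fin 3 → ℝ | (∀ i, p i ∈ Set.Icc (0 : ℝ) 1) ∧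
        2 * max |γ / 2 + (1 - γ) * (p 0 - p 1)| |γ / 2 + (1 - γ) * (p 1 - p 2)| < 1} =
      3 / 4 ↔ 1 / 3 ≤ γ := by
  change volume (ergodicityCriterionSet γ) = 3 / 4 ↔ _
  refine ⟨fun hvol => ?_, fun hγ₃ => volume_ergodicityCriterionSet_of_le hγ₃ hγ.2⟩
  by_contra! hγ₃
  exact (volume_ergodicityCriterionSet_lt hγ.1.le hγ₃).ne hvol
end

section
/- Let f : Σ → ℝ depend on only finitely many coordinates (i.e., there is a finite set F ⊆ ℤ such that f(η) = f(ζ) whenever η and ζ agree on F). Then for every η ∈ Σ, all of the following sums over x ∈ ℤ have only finitely many nonzero terms and ∑_x [ (1/4)f(η^{x,x−1,−1}) + (1/4)f(η^{x,x−1,1}) + (1/4)f(η^{x,x+1,−1}) + (1/4)f(η^{x,x+1,1}) − f(η) ] = ∑_x c'(x,η)[f(η_x) − f(η)] + (1/2)∑_x [f(_xη_{x+1}) − f(η)]. That is, the game-A' generator is the sum of a spin-system part with rates c' and an exclusion part. -/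
/-- Configuration with the coordinates at `x` and `x+1` interchanged: `_xη_{x+1}`. -/
def swapAt (η : ℤ → Bool) (x : ℤ) : ℤ → Bool :=
  Function.update (Function.update η x (η (x + 1))) (x + 1) (η x)

/-- `duel η x y w` is `η^{x,y,±1}`: player `x` competes with neighbor `y`; if `w = true`
(`x` wins) coordinate `x` is set to `1` and `y` to `0`; if `w = false` vice versa. -/
def duel (η : ℤ → Bool) (x y : ℤ) (w : Bool) : ℤ → Bool :=
  Function.update (Function.update η y (!w)) x w

lemma update_eq_self' (η : ℤ → Bool) (x : ℤ) (b : Bool) (h : η x = b) :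
    Function.update η x b = η := by
  rw [← h, Function.update_eq_self]

lemma duel_left (η : ℤ → Bool) (x : ℤ) (w : Bool) :
    duel η x (x - 1) w = duel η (x - 1) x (!w) := by
  unfold duel
  rw [Bool.not_not, Function.update_comm (show x - 1 ≠ x by omega)]

lemma key (f : (ℤ → Bool) → ℝ) (η : ℤ → Bool) (x : ℤ) :
    2 * ((1/4) * f (duel η x (x+1) false) + (1/4) * f (duel η x (x+1) true)
        - (1/2) * f η)
    = (1/2) * (if η x = η (x+1) then (1:ℝ) else 0) * (f (flipAt η x) - f η)
      + (1/2) * (if η x = η (x+1) then (1:ℝ) else 0) * (f (flipAt η (x+1)) - f η)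
      + (1/2) * (f (swapAt η x) - f η) := by
  have hne : x + 1 ≠ x := by omega
  cases hx : η x <;> cases hy : η (x + 1)
  · have h1 : duel η x (x+1) true = flipAt η x := by
      unfold duel flipAt
      rw [Bool.not_true, update_eq_self' η (x+1) false hy, hx, Bool.not_false]
    have h2 : duel η x (x+1) false = flipAt η (x+1) := by
      unfold duel flipAt
      rw [Bool.not_false, hy, Bool.not_false,
        update_eq_self' _ x false (by rw [Function.update_of_ne hne.symm]; exact hx)]
    have h3 : swapAt η x = η := by
      unfold swapAt
      rw [update_eq_self' η x (η (x+1)) (hx.trans hy.symm),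
        update_eq_self' η (x+1) (η x) (hy.trans hx.symm)]
    rw [h1, h2, h3]
    norm_num; ring
  · have h1 : duel η x (x+1) false = η := by
      unfold duel
      rw [Bool.not_false, update_eq_self' η (x+1) true hy,
        update_eq_self' η x false hx]
    have h2 : duel η x (x+1) true = swapAt η x := by
      unfold duel swapAt
      rw [Bool.not_true, hx, hy, Function.update_comm hne]
    rw [h1, h2]
    norm_num; ring
  · have h1 : duel η x (x+1) true = η := by
      unfold duel
      rw [Bool.not_true, update_eq_self' η (x+1) false hy,
        update_eq_self' η x true hx]
    have h2 : duel η x (x+1) false = swapAt η x := by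
      unfold duel swapAt
      rw [Bool.not_false, hx, hy, Function.update_comm hne]
    rw [h1, h2]
    norm_num; ring
  · have h1 : duel η x (x+1) false = flipAt η x := by
      unfold duel flipAt
      rw [Bool.not_false, update_eq_self' η (x+1) true hy, hx, Bool.not_true]
    have h2 : duel η x (x+1) true = flipAt η (x+1) := by
      unfold duel flipAt
      rw [Bool.not_true, hy, Bool.not_true,
        update_eq_self' _ x true (by rw [Function.update_of_ne hne.symm]; exact hx)]
    have h3 : swapAt η x = η := by
      unfold swapAt
      rw [update_eq_self' η x (η (x+1)) (hx.trans hy.symm),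
        update_eq_self' η (x+1) (η x) (hy.trans hx.symm)]
    rw [h1, h2, h3]
    norm_num; ring

set_option maxHeartbeats 1000000

/-- If `f` depends on only finitely many coordinates, then all the sums defining the
game-A' generator have finitely many nonzero terms, and the game-A' generator is the sum
of a spin-system part with rates `c'` and an exclusion part:
`∑_x[(1/4)f(η^{x,x-1,-1}) + (1/4)f(η^{x,x-1,1}) + (1/4)f(η^{x,x+1,-1}) + (1/4)f(η^{x,x+1,1}) - f(η)]
  = ∑_x c'(x,η)[f(η_x) - f(η)] + (1/2)∑_x[f(_xη_{x+1}) - f(η)]`. -/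
theorem gameA'_generator_decomposition (f : (ℤ → Bool) → ℝ)
    (hf : ∃ F : Finset ℤ, ∀ η ζ : ℤ → Bool, (∀ y ∈ F, η y = ζ y) → f η = f ζ)
    (η : ℤ → Bool) :
    (Function.support fun x : ℤ =>
        (1 / 4) * f (duel η x (x - 1) false) + (1 / 4) * f (duel η x (x - 1) true) +
          (1 / 4) * f (duel η x (x + 1) false) + (1 / 4) * f (duel η x (x + 1) true) -
          f η).Finite ∧
    (Function.support fun x : ℤ => cA x η * (f (flipAt η x) - f η)).Finite ∧
    (Function.support fun x : ℤ => f (swapAt η x) - f η).Finite ∧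
    ∑' x : ℤ,
        ((1 / 4) * f (duel η x (x - 1) false) + (1 / 4) * f (duel η x (x - 1) true) +
          (1 / 4) * f (duel η x (x + 1) false) + (1 / 4) * f (duel η x (x + 1) true) -
          f η) =
      (∑' x : ℤ, cA x η * (f (flipAt η x) - f η)) +
        (1 / 2) * ∑' x : ℤ, (f (swapAt η x) - f η) := by
  obtain ⟨F, hf⟩ := hf
  set S : Finset ℤ := F ∪ F.image (· + 1) ∪ F.image (· - 1) with hSdef
  have hmem : ∀ x : ℤ, x ∉ S → x ∉ F ∧ x - 1 ∉ F ∧ x + 1 ∉ F := by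
    intro x hx
    simp only [hSdef, Finset.mem_union, Finset.mem_image, not_or, not_exists] at hx
    obtain ⟨⟨h1, h2⟩, h3⟩ := hx
    refine ⟨h1, fun h => ?_, fun h => ?_⟩
    · exact h2 (x - 1) ⟨h, by omega⟩
    · exact h3 (x + 1) ⟨h, by omega⟩
  have hfη : ∀ ζ : ℤ → Bool, (∀ y ∈ F, ζ y = η y) → f ζ = f η := fun ζ h => hf ζ η h
  have agree2 : ∀ (a b : ℤ) (u v : Bool), a ∉ F → b ∉ F →
      f (Function.update (Function.update η a u) b v) = f η := by
    intro a b u v ha hb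
    apply hfη
    intro y hy
    rw [Function.update_of_ne (by rintro rfl; exact hb hy),
      Function.update_of_ne (by rintro rfl; exact ha hy)]
  have agree1 : ∀ (a : ℤ) (u : Bool), a ∉ F → f (Function.update η a u) = f η := by
    intro a u ha
    apply hfη
    intro y hy
    rw [Function.update_of_ne (by rintro rfl; exact ha hy)]
  -- the six sequences
  set A : ℤ → ℝ := fun x =>
      (1 / 4) * f (duel η x (x - 1) false) + (1 / 4) * f (duel η x (x - 1) true) +
        (1 / 4) * f (duel η x (x + 1) false) + (1 / 4) * f (duel η x (x + 1) true) -
        f η with hAdef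
  set B : ℤ → ℝ := fun x => cA x η * (f (flipAt η x) - f η) with hBdef
  set C : ℤ → ℝ := fun x => f (swapAt η x) - f η with hCdef
  set P : ℤ → ℝ := fun x =>
      (1/4) * f (duel η x (x+1) false) + (1/4) * f (duel η x (x+1) true)
        - (1/2) * f η with hPdef
  set U : ℤ → ℝ := fun x =>
      (1/2) * (if η x = η (x+1) then (1:ℝ) else 0) * (f (flipAt η x) - f η) with hUdef
  set W : ℤ → ℝ := fun x =>
      (1/2) * (if η x = η (x+1) then (1:ℝ) else 0) * (f (flipAt η (x+1)) - f η) with hWdef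
  -- vanishing off S
  have hA0 : ∀ x ∉ S, A x = 0 := by
    intro x hx
    obtain ⟨h1, h2, h3⟩ := hmem x hx
    simp only [hAdef, duel, agree2 _ _ _ _ h2 h1, agree2 _ _ _ _ h3 h1]
    ring
  have hB0 : ∀ x ∉ S, B x = 0 := by
    intro x hx
    obtain ⟨h1, _, _⟩ := hmem x hx
    simp only [hBdef, flipAt, agree1 _ _ h1]
    ring
  have hC0 : ∀ x ∉ S, C x = 0 := by
    intro x hx
    obtain ⟨h1, _, h3⟩ := hmem x hx
    have : f (swapAt η x) = f η := by
      unfold swapAt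
      apply hfη
      intro y hy
      rw [Function.update_of_ne (by rintro rfl; exact h3 hy),
        Function.update_of_ne (by rintro rfl; exact h1 hy)]
    simp [hCdef, this]
  have hP0 : ∀ x ∉ S, P x = 0 := by
    intro x hx
    obtain ⟨h1, _, h3⟩ := hmem x hx
    simp only [hPdef, duel, agree2 _ _ _ _ h3 h1]
    ring
  have hU0 : ∀ x ∉ S, U x = 0 := by
    intro x hx
    obtain ⟨h1, _, _⟩ := hmem x hx
    simp only [hUdef, flipAt, agree1 _ _ h1]
    ring
  have hW0 : ∀ x ∉ S, W x = 0 := by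
    intro x hx
    obtain ⟨_, _, h3⟩ := hmem x hx
    simp only [hWdef, flipAt, agree1 _ _ h3]
    ring
  -- summability
  have sA : Summable A := summable_of_ne_finset_zero hA0
  have sB : Summable B := summable_of_ne_finset_zero hB0
  have sC : Summable C := summable_of_ne_finset_zero hC0
  have sP : Summable P := summable_of_ne_finset_zero hP0
  have sU : Summable U := summable_of_ne_finset_zero hU0
  have sW : Summable W := summable_of_ne_finset_zero hW0
  have sW' : Summable (fun x => W (x - 1)) :=
    (Equiv.subRight (1 : ℤ)).summable_iff.mpr sW
  have sP' : Summable (fun x => P (x - 1)) :=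
    (Equiv.subRight (1 : ℤ)).summable_iff.mpr sP
  refine ⟨Set.Finite.subset S.finite_toSet (Function.support_subset_iff'.mpr hA0),
    Set.Finite.subset S.finite_toSet (Function.support_subset_iff'.mpr hB0),
    Set.Finite.subset S.finite_toSet (Function.support_subset_iff'.mpr hC0), ?_⟩
  -- pointwise decomposition A x = P (x-1) + P x
  have hAP : ∀ x, A x = P (x - 1) + P x := by
    intro x
    have e1 : x - 1 + 1 = x := by ring
    simp only [hAdef, hPdef, duel_left η x, e1, Bool.not_false, Bool.not_true]
    ring
  -- key pointwise identity 2 * P x = U x + W x + (1/2) * C x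
  have hPK : ∀ x, 2 * P x = U x + W x + (1/2) * C x := by
    intro x
    have := key f η x
    simp only [hPdef, hUdef, hWdef, hCdef]
    linarith [this]
  -- W shifted equals the left part of cA
  have hUW : ∀ x, U x + W (x - 1) = B x := by
    intro x
    have e1 : x - 1 + 1 = x := by ring
    simp only [hUdef, hWdef, hBdef, cA, e1]
    have : (if η (x - 1) = η x then (1:ℝ) else 0) = (if η x = η (x - 1) then (1:ℝ) else 0) := by
      cases hh : η (x - 1) <;> cases hh2 : η x <;> simp [hh, hh2]
    rw [this]
    ring
  calc ∑' x, A x = ∑' x, (P (x - 1) + P x) := by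
        exact tsum_congr hAP
    _ = (∑' x, P (x - 1)) + ∑' x, P x := Summable.tsum_add sP' sP
    _ = (∑' x, P x) + ∑' x, P x := by
        congr 1
        exact (Equiv.subRight (1 : ℤ)).tsum_eq P
    _ = ∑' x, 2 * P x := by rw [tsum_mul_left]; ring
    _ = ∑' x, (U x + W x + (1/2) * C x) := tsum_congr hPK
    _ = ((∑' x, U x) + ∑' x, W x) + ∑' x, (1/2) * C x := by
        rw [Summable.tsum_add (sU.add sW) (sC.mul_left _), Summable.tsum_add sU sW]
    _ = ((∑' x, U x) + ∑' x, W (x - 1)) + (1/2) * ∑' x, C x := by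
        rw [tsum_mul_left]
        congr 2
        exact ((Equiv.subRight (1 : ℤ)).tsum_eq W).symm
    _ = (∑' x, (U x + W (x - 1))) + (1/2) * ∑' x, C x := by
        rw [Summable.tsum_add sU sW']
    _ = (∑' x, B x) + (1/2) * ∑' x, C x := by rw [tsum_congr hUW]
end

section
/- Let K ≥ 1 and let f : Σ → ℝ depend on η only through the 2K+1 coordinates η(x), −K ≤ x ≤ K. Then for every N ≥ 2K+4 and every η ∈ Σ_N, (Ω^N_{A'} ψ_N f)(η) = ψ_N(Ω_{A'} f)(η). -/
/-- Left endpoint of the player labels: `l_N = -(N-1)/2` if `N` odd, `-N/2` if `N` even. -/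
def lN (N : ℕ) : ℤ := -((N : ℤ) / 2)

/-- Right endpoint of the player labels: `r_N = (N-1)/2` if `N` odd, `N/2 - 1` if `N` even. -/
def rN (N : ℕ) : ℤ := ((N : ℤ) - 1) / 2

/-- The representative of `x` modulo `N` lying in `{l_N, …, r_N}` (circular convention). -/
def wrap (N : ℕ) (x : ℤ) : ℤ := lN N + (x - lN N) % (N : ℤ)

/-- Extension of a configuration on `{l_N, …, r_N}` to all of `ℤ`, with value `1` outside. -/
def extendCfg (N : ℕ) (η : ℤ → Bool) : ℤ → Bool :=
  fun x => if lN N ≤ x ∧ x ≤ rN N then η x else true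

/-- `ψ_N` maps `f : Σ → ℝ` to a function on `Σ_N` via the extension by `1`s. -/
def psiN (N : ℕ) (f : (ℤ → Bool) → ℝ) (η : ℤ → Bool) : ℝ := f (extendCfg N η)

/-- `η^{x,-1}` on `Σ_N`: coordinate `x-1` (circularly) is set to `1` and `x` to `0`. -/
def stepDown (N : ℕ) (η : ℤ → Bool) (x : ℤ) : ℤ → Bool :=
  Function.update (Function.update η (wrap N (x - 1)) true) x false

/-- `η^{x,1}` on `Σ_N`: coordinate `x` is set to `0` and `x+1` (circularly) to `1`. -/
def stepUp (N : ℕ) (η : ℤ → Bool) (x : ℤ) : ℤ → Bool :=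
  Function.update (Function.update η (wrap N (x + 1)) true) x false

/-- The continuum game-A' generator
`(Ω_{A'} f)(η) = ∑_x c'(x,η)[f(η_x) - f(η)] + (1/2)∑_x[f(_xη_{x+1}) - f(η)]`. -/
noncomputable def OmegaA (f : (ℤ → Bool) → ℝ) (η : ℤ → Bool) : ℝ :=
  (∑' x : ℤ, cA x η * (f (flipAt η x) - f η)) +
    (1 / 2) * ∑' x : ℤ, (f (swapAt η x) - f η)

/-- The discrete game-A' generator
`(Ω^N_{A'} g)(η) = ∑_{x=l_N}^{r_N} [(1/2)g(η^{x,-1}) + (1/2)g(η^{x,1}) - g(η)]`. -/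
noncomputable def OmegaNA (N : ℕ) (g : (ℤ → Bool) → ℝ) (η : ℤ → Bool) : ℝ :=
  ∑ x ∈ Finset.Icc (lN N) (rN N),
    ((1 / 2) * g (stepDown N η x) + (1 / 2) * g (stepUp N η x) - g η)


def cDown' (ζ : ℤ → Bool) (x : ℤ) : ℤ → Bool :=
  Function.update (Function.update ζ (x - 1) true) x false

def cUp' (ζ : ℤ → Bool) (x : ℤ) : ℤ → Bool :=
  Function.update (Function.update ζ (x + 1) true) x false

lemma keyE (f : (ℤ → Bool) → ℝ) (χ : ℤ → Bool) (x : ℤ) :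
    (1/2 : ℝ) * (f (cUp' χ x) - f χ) + (1/2) * (f (cDown' χ (x+1)) - f χ)
      = (1/2) * ((if χ x = χ (x+1) then (1:ℝ) else 0) * (f (flipAt χ x) - f χ))
        + (1/2) * ((if χ x = χ (x+1) then (1:ℝ) else 0) * (f (flipAt χ (x+1)) - f χ))
        + (1/2) * (f (swapAt χ x) - f χ) := by
  have hx1 : x + 1 - 1 = x := by ring
  cases h1 : χ x <;> cases h2 : χ (x + 1)
  · -- false, false
    have e1 : cUp' χ x = flipAt χ (x+1) := by
      funext y
      simp only [cUp', flipAt, Function.update_apply]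
      split_ifs with a b <;> first | rfl | omega | simp_all
    have e2 : cDown' χ (x+1) = flipAt χ x := by
      funext y
      simp only [cDown', flipAt, hx1, Function.update_apply]
      split_ifs with a b <;> first | rfl | omega | simp_all
    have e3 : swapAt χ x = χ := by
      funext y
      simp only [swapAt, Function.update_apply]
      split_ifs with a b <;> first | rfl | omega | simp_all
    rw [e1, e2, e3]
    simp only [h1, h2, Bool.false_eq_true, Bool.true_eq_false, if_false, if_true, reduceIte]
    ring
  · -- false, true
    have e1 : cUp' χ x = χ := by
      funext y
      simp only [cUp', Function.update_apply]
      split_ifs with a b <;> first | rfl | omega | simp_all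
    have e2 : cDown' χ (x+1) = swapAt χ x := by
      funext y
      simp only [cDown', swapAt, hx1, Function.update_apply]
      split_ifs with a b <;> first | rfl | omega | simp_all
    rw [e1, e2]
    simp only [h1, h2, Bool.false_eq_true, Bool.true_eq_false, if_false, if_true, reduceIte]
    ring
  · -- true, false
    have e1 : cUp' χ x = swapAt χ x := by
      funext y
      simp only [cUp', swapAt, Function.update_apply]
      split_ifs with a b <;> first | rfl | omega | simp_all
    have e2 : cDown' χ (x+1) = χ := by
      funext y
      simp only [cDown', hx1, Function.update_apply]
      split_ifs with a b <;> first | rfl | omega | simp_all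
    rw [e1, e2]
    simp only [h1, h2, Bool.false_eq_true, Bool.true_eq_false, if_false, if_true, reduceIte]
    ring
  · -- true, true
    have e1 : cUp' χ x = flipAt χ x := by
      funext y
      simp only [cUp', flipAt, Function.update_apply]
      split_ifs with a b <;> first | rfl | omega | simp_all
    have e2 : cDown' χ (x+1) = flipAt χ (x+1) := by
      funext y
      simp only [cDown', flipAt, hx1, Function.update_apply]
      split_ifs with a b <;> first | rfl | omega | simp_all
    have e3 : swapAt χ x = χ := by
      funext y
      simp only [swapAt, Function.update_apply]
      split_ifs with a b <;> first | rfl | omega | simp_all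
    rw [e1, e2, e3]
    simp only [h1, h2, Bool.false_eq_true, Bool.true_eq_false, if_false, if_true, reduceIte]
    ring

/-- If `f` depends on `η` only through the `2K+1` coordinates `η(x)`, `-K ≤ x ≤ K`, then
for every `N ≥ 2K+4` and every `η ∈ Σ_N`, `(Ω^N_{A'} ψ_N f)(η) = ψ_N(Ω_{A'} f)(η)`. -/
theorem discrete_generator_A'_commutes (K : ℕ) (hK : 1 ≤ K) (f : (ℤ → Bool) → ℝ)
    (hf : ∀ η ζ : ℤ → Bool, (∀ x : ℤ, |x| ≤ (K : ℤ) → η x = ζ x) → f η = f ζ)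
    (N : ℕ) (hN : 2 * K + 4 ≤ N) (η : ℤ → Bool) :
    OmegaNA N (psiN N f) η = psiN N (OmegaA f) η := by
  have hN2 : (2*(K:ℤ)+4) ≤ (N:ℤ) := by exact_mod_cast hN
  have hL : lN N ≤ -(K:ℤ) - 2 := by simp only [lN]; omega
  have hR : (K:ℤ) + 1 ≤ rN N := by simp only [rN]; omega
  have hLR : rN N - lN N = (N:ℤ) - 1 := by simp only [lN, rN]; omega
  -- wrap facts
  have hwrap_id : ∀ x : ℤ, lN N ≤ x → x ≤ rN N → wrap N x = x := by
    intro x h1 h2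
    have h4 : (x - lN N) % (N:ℤ) = x - lN N :=
      Int.emod_eq_of_lt (by omega) (by omega)
    simp only [wrap, h4]; ring
  have hwrap_lo : wrap N (lN N - 1) = rN N := by
    have h1 : lN N - 1 - lN N = (-1 : ℤ) := by ring
    have h2 : (-1 : ℤ) % (N:ℤ) = (N:ℤ) - 1 := by
      have h3 : ((-1 : ℤ) + (N:ℤ) * 1) % (N:ℤ) = (-1:ℤ) % (N:ℤ) :=
        Int.add_mul_emod_self_left (-1) (N:ℤ) 1
      have h4 : ((-1:ℤ) + (N:ℤ) * 1) % (N:ℤ) = (-1:ℤ) + (N:ℤ) * 1 :=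
        Int.emod_eq_of_lt (by omega) (by omega)
      omega
    simp only [wrap, h1, h2]; omega
  have hwrap_hi : wrap N (rN N + 1) = lN N := by
    have h1 : rN N + 1 - lN N = (N:ℤ) := by omega
    simp only [wrap, h1, Int.emod_self]; ring
  -- discrete steps coincide with continuum steps after extension
  have hstepD : ∀ x : ℤ, lN N ≤ x → x ≤ rN N →
      psiN N f (stepDown N η x) = f (cDown' (extendCfg N η) x) := by
    intro x h1 h2
    apply hf
    intro y hy
    rw [abs_le] at hy
    simp only [extendCfg, stepDown, cDown', Function.update_apply]
    rw [if_pos (show lN N ≤ y ∧ y ≤ rN N by omega),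
        if_pos (show lN N ≤ y ∧ y ≤ rN N by omega)]
    rcases eq_or_lt_of_le h1 with he | hlt
    · rw [← he, hwrap_lo]
      rw [if_neg (show ¬ y = lN N by omega), if_neg (show ¬ y = rN N by omega),
          if_neg (show ¬ y = lN N by omega), if_neg (show ¬ y = lN N - 1 by omega)]
    · rw [hwrap_id (x-1) (by omega) (by omega)]
  have hstepU : ∀ x : ℤ, lN N ≤ x → x ≤ rN N →
      psiN N f (stepUp N η x) = f (cUp' (extendCfg N η) x) := by
    intro x h1 h2
    apply hf
    intro y hy
    rw [abs_le] at hy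
    simp only [extendCfg, stepUp, cUp', Function.update_apply]
    rw [if_pos (show lN N ≤ y ∧ y ≤ rN N by omega),
        if_pos (show lN N ≤ y ∧ y ≤ rN N by omega)]
    rcases eq_or_lt_of_le h2 with he | hlt
    · rw [he, hwrap_hi]
      rw [if_neg (show ¬ y = rN N by omega), if_neg (show ¬ y = lN N by omega),
          if_neg (show ¬ y = rN N by omega), if_neg (show ¬ y = rN N + 1 by omega)]
    · rw [hwrap_id (x+1) (by omega) (by omega)]
  -- vanishing lemmas
  have hflip0 : ∀ x : ℤ, ¬ (-(K:ℤ) ≤ x ∧ x ≤ (K:ℤ)) →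
      f (flipAt (extendCfg N η) x) = f (extendCfg N η) := by
    intro x hx
    apply hf
    intro y hy
    rw [abs_le] at hy
    simp only [flipAt, Function.update_apply]
    rw [if_neg (show ¬ y = x by omega)]
  have hswap0 : ∀ x : ℤ, ¬ (-(K:ℤ) - 1 ≤ x ∧ x ≤ (K:ℤ)) →
      f (swapAt (extendCfg N η) x) = f (extendCfg N η) := by
    intro x hx
    apply hf
    intro y hy
    rw [abs_le] at hy
    simp only [swapAt, Function.update_apply]
    rw [if_neg (show ¬ y = x + 1 by omega), if_neg (show ¬ y = x by omega)]
  have hD0 : f (cDown' (extendCfg N η) (lN N)) = f (extendCfg N η) := by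
    apply hf
    intro y hy
    rw [abs_le] at hy
    simp only [cDown', Function.update_apply]
    rw [if_neg (show ¬ y = lN N by omega), if_neg (show ¬ y = lN N - 1 by omega)]
  have hU0 : f (cUp' (extendCfg N η) (rN N)) = f (extendCfg N η) := by
    apply hf
    intro y hy
    rw [abs_le] at hy
    simp only [cUp', Function.update_apply]
    rw [if_neg (show ¬ y = rN N by omega), if_neg (show ¬ y = rN N + 1 by omega)]
  -- right-hand side as finite sums
  have ht1 : (∑' (x:ℤ), cA x (extendCfg N η) *
        (f (flipAt (extendCfg N η) x) - f (extendCfg N η)))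
      = ∑ x ∈ Finset.Icc (-(K:ℤ)-1) (K:ℤ), cA x (extendCfg N η) *
        (f (flipAt (extendCfg N η) x) - f (extendCfg N η)) := by
    apply tsum_eq_sum
    intro x hx
    rw [Finset.mem_Icc] at hx
    rw [hflip0 x (by omega), sub_self, mul_zero]
  have ht2 : (∑' (x:ℤ), (f (swapAt (extendCfg N η) x) - f (extendCfg N η)))
      = ∑ x ∈ Finset.Icc (-(K:ℤ)-1) (K:ℤ),
        (f (swapAt (extendCfg N η) x) - f (extendCfg N η)) := by
    apply tsum_eq_sum
    intro x hx
    rw [Finset.mem_Icc] at hx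
    rw [hswap0 x (by omega), sub_self]
  have hRHS : psiN N (OmegaA f) η
      = (∑ x ∈ Finset.Icc (-(K:ℤ)-1) (K:ℤ), cA x (extendCfg N η) *
          (f (flipAt (extendCfg N η) x) - f (extendCfg N η)))
        + (1/2) * ∑ x ∈ Finset.Icc (-(K:ℤ)-1) (K:ℤ),
          (f (swapAt (extendCfg N η) x) - f (extendCfg N η)) := by
    show OmegaA f (extendCfg N η) = _
    unfold OmegaA
    rw [ht1, ht2]
  rw [hRHS]
  unfold OmegaNA
  calc
    ∑ x ∈ Finset.Icc (lN N) (rN N),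
        ((1/2) * psiN N f (stepDown N η x) + (1/2) * psiN N f (stepUp N η x)
          - psiN N f η)
      = ∑ x ∈ Finset.Icc (lN N) (rN N),
          ((1/2) * (f (cDown' (extendCfg N η) x) - f (extendCfg N η))
            + (1/2) * (f (cUp' (extendCfg N η) x) - f (extendCfg N η))) := by
        refine Finset.sum_congr rfl ?_
        intro x hx
        rw [Finset.mem_Icc] at hx
        rw [hstepD x hx.1 hx.2, hstepU x hx.1 hx.2]
        simp only [psiN]
        ring
    _ = (∑ x ∈ Finset.Icc (lN N) (rN N),
          (1/2) * (f (cDown' (extendCfg N η) x) - f (extendCfg N η)))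
        + ∑ x ∈ Finset.Icc (lN N) (rN N),
          (1/2) * (f (cUp' (extendCfg N η) x) - f (extendCfg N η)) :=
        Finset.sum_add_distrib
    _ = (∑ x ∈ Finset.Icc (lN N + 1) (rN N),
          (1/2) * (f (cDown' (extendCfg N η) x) - f (extendCfg N η)))
        + ∑ x ∈ Finset.Icc (lN N) (rN N - 1),
          (1/2) * (f (cUp' (extendCfg N η) x) - f (extendCfg N η)) := by
        congr 1
        · refine (Finset.sum_subset (Finset.Icc_subset_Icc (by omega) le_rfl) ?_).symm
          intro x hx hx'
          rw [Finset.mem_Icc] at hx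
          simp only [Finset.mem_Icc, not_and, not_le] at hx'
          have hxl : x = lN N := by omega
          rw [hxl, hD0, sub_self, mul_zero]
        · refine (Finset.sum_subset (Finset.Icc_subset_Icc le_rfl (by omega)) ?_).symm
          intro x hx hx'
          rw [Finset.mem_Icc] at hx
          simp only [Finset.mem_Icc, not_and, not_le] at hx'
          have hxr : x = rN N := by omega
          rw [hxr, hU0, sub_self, mul_zero]
    _ = (∑ x ∈ Finset.Icc (lN N) (rN N - 1),
          (1/2) * (f (cDown' (extendCfg N η) (x+1)) - f (extendCfg N η)))
        + ∑ x ∈ Finset.Icc (lN N) (rN N - 1),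
          (1/2) * (f (cUp' (extendCfg N η) x) - f (extendCfg N η)) := by
        congr 1
        have hmap := Finset.sum_map (Finset.Icc (lN N) (rN N - 1))
          (addRightEmbedding (1:ℤ))
          (fun x => (1/2:ℝ) * (f (cDown' (extendCfg N η) x) - f (extendCfg N η)))
        rw [Finset.map_add_right_Icc] at hmap
        simp only [addRightEmbedding_apply] at hmap
        rw [show rN N - 1 + 1 = rN N by ring] at hmap
        exact hmap
    _ = ∑ x ∈ Finset.Icc (lN N) (rN N - 1),
          ((1/2) * (f (cUp' (extendCfg N η) x) - f (extendCfg N η))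
            + (1/2) * (f (cDown' (extendCfg N η) (x+1)) - f (extendCfg N η))) := by
        rw [add_comm, ← Finset.sum_add_distrib]
    _ = ∑ x ∈ Finset.Icc (lN N) (rN N - 1),
          ((1/2) * ((if (extendCfg N η) x = (extendCfg N η) (x+1) then (1:ℝ) else 0)
              * (f (flipAt (extendCfg N η) x) - f (extendCfg N η)))
            + (1/2) * ((if (extendCfg N η) x = (extendCfg N η) (x+1) then (1:ℝ) else 0)
              * (f (flipAt (extendCfg N η) (x+1)) - f (extendCfg N η)))
            + (1/2) * (f (swapAt (extendCfg N η) x) - f (extendCfg N η))) :=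
        Finset.sum_congr rfl (fun x _ => keyE f (extendCfg N η) x)
    _ = (∑ x ∈ Finset.Icc (lN N) (rN N - 1),
          (1/2) * ((if (extendCfg N η) x = (extendCfg N η) (x+1) then (1:ℝ) else 0)
            * (f (flipAt (extendCfg N η) x) - f (extendCfg N η))))
        + (∑ x ∈ Finset.Icc (lN N) (rN N - 1),
          (1/2) * ((if (extendCfg N η) x = (extendCfg N η) (x+1) then (1:ℝ) else 0)
            * (f (flipAt (extendCfg N η) (x+1)) - f (extendCfg N η))))
        + ∑ x ∈ Finset.Icc (lN N) (rN N - 1),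
          (1/2) * (f (swapAt (extendCfg N η) x) - f (extendCfg N η)) := by
        rw [Finset.sum_add_distrib, Finset.sum_add_distrib]
    _ = (∑ x ∈ Finset.Icc (-(K:ℤ)-1) (K:ℤ),
          (1/2) * ((if (extendCfg N η) x = (extendCfg N η) (x+1) then (1:ℝ) else 0)
            * (f (flipAt (extendCfg N η) x) - f (extendCfg N η))))
        + (∑ x ∈ Finset.Icc (-(K:ℤ)-1) (K:ℤ),
          (1/2) * ((if (extendCfg N η) (x-1) = (extendCfg N η) x then (1:ℝ) else 0)
            * (f (flipAt (extendCfg N η) x) - f (extendCfg N η))))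
        + ∑ x ∈ Finset.Icc (-(K:ℤ)-1) (K:ℤ),
          (1/2) * (f (swapAt (extendCfg N η) x) - f (extendCfg N η)) := by
        congr 1
        · congr 1
          · -- A-sum restriction
            refine (Finset.sum_subset (Finset.Icc_subset_Icc (by omega) (by omega)) ?_).symm
            intro x hx hx'
            rw [Finset.mem_Icc] at hx
            simp only [Finset.mem_Icc, not_and, not_le] at hx'
            rw [hflip0 x (by omega), sub_self, mul_zero, mul_zero]
          · -- B-sum: shift then restrict
            have hcongr : ∑ x ∈ Finset.Icc (lN N) (rN N - 1),
                (1/2:ℝ) * ((if (extendCfg N η) x = (extendCfg N η) (x+1) then (1:ℝ) else 0)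
                  * (f (flipAt (extendCfg N η) (x+1)) - f (extendCfg N η)))
              = ∑ x ∈ Finset.Icc (lN N) (rN N - 1), (fun z =>
                (1/2:ℝ) * ((if (extendCfg N η) (z-1) = (extendCfg N η) z then (1:ℝ) else 0)
                  * (f (flipAt (extendCfg N η) z) - f (extendCfg N η)))) (x+1) := by
              refine Finset.sum_congr rfl ?_
              intro x _
              simp only [add_sub_cancel_right]
            rw [hcongr]
            have hmap := Finset.sum_map (Finset.Icc (lN N) (rN N - 1))
              (addRightEmbedding (1:ℤ))
              (fun z => (1/2:ℝ) * ((if (extendCfg N η) (z-1) = (extendCfg N η) z then (1:ℝ) else 0)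
                  * (f (flipAt (extendCfg N η) z) - f (extendCfg N η))))
            rw [Finset.map_add_right_Icc] at hmap
            simp only [addRightEmbedding_apply] at hmap
            rw [show rN N - 1 + 1 = rN N by ring] at hmap
            rw [← hmap]
            refine (Finset.sum_subset (Finset.Icc_subset_Icc (by omega) (by omega)) ?_).symm
            intro x hx hx'
            rw [Finset.mem_Icc] at hx
            simp only [Finset.mem_Icc, not_and, not_le] at hx'
            rw [hflip0 x (by omega), sub_self, mul_zero, mul_zero]
        · -- S-sum restriction
          refine (Finset.sum_subset (Finset.Icc_subset_Icc (by omega) (by omega)) ?_).symm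
          intro x hx hx'
          rw [Finset.mem_Icc] at hx
          simp only [Finset.mem_Icc, not_and, not_le] at hx'
          rw [hswap0 x (by omega), sub_self, mul_zero]
    _ = (∑ x ∈ Finset.Icc (-(K:ℤ)-1) (K:ℤ), cA x (extendCfg N η) *
          (f (flipAt (extendCfg N η) x) - f (extendCfg N η)))
        + (1/2) * ∑ x ∈ Finset.Icc (-(K:ℤ)-1) (K:ℤ),
          (f (swapAt (extendCfg N η) x) - f (extendCfg N η)) := by
        rw [Finset.mul_sum, ← Finset.sum_add_distrib, ← Finset.sum_add_distrib,
          ← Finset.sum_add_distrib]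
        refine Finset.sum_congr rfl ?_
        intro x _
        have hcomm : (if (extendCfg N η) (x-1) = (extendCfg N η) x then (1:ℝ) else 0)
            = (if (extendCfg N η) x = (extendCfg N η) (x-1) then (1:ℝ) else 0) :=
          if_congr eq_comm rfl rfl
        rw [hcomm]
        simp only [cA]
        ring
end

section
/- Fix γ ∈ [0,1]. Let K ≥ 1 and let f : Σ → ℝ depend on η only through the 2K+1 coordinates η(x), −K ≤ x ≤ K. Then for every N ≥ 2K+4 and every η ∈ Σ_N, (Ω^N_{C'} ψ_N f)(η) = ψ_N(Ω_{C'} f)(η), where Ω^N_{C'} := γΩ^N_{A'} + (1−γ)Ω^N_B and Ω_{C'} := γΩ_{A'} + (1−γ)Ω_B. -/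
/-- Game B flip rate on `Σ_N` (neighbors computed circularly). -/
def cBN (p₀ p₁ p₂ p₃ : ℝ) (N : ℕ) (x : ℤ) (η : ℤ → Bool) : ℝ :=
  if η x then 1 - pSel p₀ p₁ p₂ p₃ (η (wrap N (x - 1))) (η (wrap N (x + 1)))
  else pSel p₀ p₁ p₂ p₃ (η (wrap N (x - 1))) (η (wrap N (x + 1)))

/-- The continuum game-B generator `(Ω_B f)(η) = ∑_x c(x,η)[f(η_x) - f(η)]`. -/
noncomputable def OmegaB (p₀ p₁ p₂ p₃ : ℝ) (f : (ℤ → Bool) → ℝ) (η : ℤ → Bool) : ℝ :=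
  ∑' x : ℤ, cB p₀ p₁ p₂ p₃ x η * (f (flipAt η x) - f η)

/-- The discrete game-B generator `(Ω^N_B g)(η) = ∑_{x=l_N}^{r_N} c(x,η)[g(η_x) - g(η)]`. -/
noncomputable def OmegaNB (p₀ p₁ p₂ p₃ : ℝ) (N : ℕ) (g : (ℤ → Bool) → ℝ)
    (η : ℤ → Bool) : ℝ :=
  ∑ x ∈ Finset.Icc (lN N) (rN N), cBN p₀ p₁ p₂ p₃ N x η * (g (flipAt η x) - g η)

section Helpers

lemma len_eq (N : ℕ) (h : 1 ≤ N) : rN N + 1 - lN N = N := by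
  have : (1:ℤ) ≤ N := by exact_mod_cast h
  simp only [lN, rN]; omega

lemma wrap_mem (N : ℕ) (h : 1 ≤ N) (x : ℤ) : lN N ≤ wrap N x ∧ wrap N x ≤ rN N := by
  have hN : (0:ℤ) < N := by exact_mod_cast h
  have h1 := Int.emod_nonneg (x - lN N) hN.ne'
  have h2 := Int.emod_lt_of_pos (x - lN N) hN
  have h3 := len_eq N h
  unfold wrap; omega

lemma wrap_eq_self (N : ℕ) (h : 1 ≤ N) (x : ℤ) (h1 : lN N ≤ x) (h2 : x ≤ rN N) :
    wrap N x = x := by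
  have h3 := len_eq N h
  have : (x - lN N) % N = x - lN N :=
    Int.emod_eq_of_lt (by omega) (by omega)
  unfold wrap; omega

lemma wrap_wrap_add (N : ℕ) (x c : ℤ) : wrap N (wrap N x + c) = wrap N (x + c) := by
  unfold wrap
  have : lN N + (x - lN N) % ↑N + c - lN N = (x - lN N) % ↑N + c := by ring
  rw [this, Int.emod_add_emod]
  ring_nf

lemma wrap_rN (N : ℕ) (h : 1 ≤ N) : wrap N (rN N + 1) = lN N := by
  have h3 := len_eq N h
  unfold wrap
  rw [show rN N + 1 - lN N = (N:ℤ) by omega, Int.emod_self]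
  ring

lemma upd2_apply (η : ℤ → Bool) (x x' : ℤ) (v v' : Bool) (y : ℤ) :
    Function.update (Function.update η x' v') x v y
      = if y = x then v else if y = x' then v' else η y := by
  simp [Function.update_apply]

lemma flipAt_apply (η : ℤ → Bool) (x y : ℤ) :
    flipAt η x y = if y = x then !η x else η y := by
  simp [flipAt, Function.update_apply]

lemma step_pair (g : (ℤ → Bool) → ℝ) (η : ℤ → Bool) (x x' : ℤ) (hne : x ≠ x') :
    (1/2) * g (Function.update (Function.update η x' true) x false)
      + (1/2) * g (Function.update (Function.update η x true) x' false) - g η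
    = (1/2) * (if η x = η x' then (g (flipAt η x) - g η) + (g (flipAt η x') - g η) else 0)
      + (1/2) * (g (Function.update (Function.update η x (η x')) x' (η x)) - g η) := by
  have hne' : x' ≠ x := hne.symm
  cases hb : η x <;> cases hb' : η x'
  · have e1 : Function.update (Function.update η x' true) x false = flipAt η x' := by
      funext y; rw [upd2_apply, flipAt_apply]
      split_ifs with h1 h2 <;> simp_all
    have e2 : Function.update (Function.update η x true) x' false = flipAt η x := by
      funext y; rw [upd2_apply, flipAt_apply]
      split_ifs with h1 h2 <;> simp_all
    have e3 : Function.update (Function.update η x false) x' false = η := by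
      funext y; rw [upd2_apply]
      split_ifs with h1 h2 <;> simp_all
    rw [e1, e2]; simp only [hb, hb']; rw [e3]; simp; ring
  · have e1 : Function.update (Function.update η x' true) x false = η := by
      funext y; rw [upd2_apply]
      split_ifs with h1 h2 <;> simp_all
    rw [e1]
    simp only [Bool.false_eq_true, if_false]; ring
  · have e1 : Function.update (Function.update η x' true) x false
        = Function.update (Function.update η x (η x')) x' (η x) := by
      funext y; rw [upd2_apply, upd2_apply]
      split_ifs with h1 h2 <;> simp_all
    have e2 : Function.update (Function.update η x true) x' false = η := by
      funext y; rw [upd2_apply]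
      split_ifs with h1 h2 <;> simp_all
    rw [e1, e2]; simp only [hb, hb']
    simp only [Bool.true_eq_false, if_false]; ring
  · have e1 : Function.update (Function.update η x' true) x false = flipAt η x := by
      funext y; rw [upd2_apply, flipAt_apply]
      split_ifs with h1 h2 <;> simp_all
    have e2 : Function.update (Function.update η x true) x' false = flipAt η x' := by
      funext y; rw [upd2_apply, flipAt_apply]
      split_ifs with h1 h2 <;> simp_all
    have e3 : Function.update (Function.update η x true) x' true = η := by
      funext y; rw [upd2_apply]
      split_ifs with h1 h2 <;> simp_all
    rw [e1, e2]; simp only [hb, hb']; rw [e3]; simp; ring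

/-- Per-bond term on the discrete torus. -/
noncomputable def Bterm (N : ℕ) (g : (ℤ → Bool) → ℝ) (η : ℤ → Bool) (x : ℤ) : ℝ :=
  (1/2) * (if η x = η (wrap N (x+1)) then
      (g (flipAt η x) - g η) + (g (flipAt η (wrap N (x+1))) - g η) else 0)
  + (1/2) * (g (Function.update (Function.update η x (η (wrap N (x+1)))) (wrap N (x+1)) (η x)) - g η)

/-- Per-bond term on the line. -/
noncomputable def Cterm (f : (ℤ → Bool) → ℝ) (ξ : ℤ → Bool) (x : ℤ) : ℝ :=
  (1/2) * (if ξ x = ξ (x+1) then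
      (f (flipAt ξ x) - f ξ) + (f (flipAt ξ (x+1)) - f ξ) else 0)
  + (1/2) * (f (swapAt ξ x) - f ξ)

end Helpers

/-- Fix `γ ∈ [0,1]`. If `f` depends on `η` only through the `2K+1` coordinates `η(x)`,
`-K ≤ x ≤ K`, then for every `N ≥ 2K+4` and every `η ∈ Σ_N`,
`(Ω^N_{C'} ψ_N f)(η) = ψ_N(Ω_{C'} f)(η)`, where `Ω^N_{C'} = γΩ^N_{A'} + (1-γ)Ω^N_B` and
`Ω_{C'} = γΩ_{A'} + (1-γ)Ω_B`. -/


theorem discrete_generator_C'_commutes (γ : ℝ) (hγ : γ ∈ Set.Icc (0 : ℝ) 1)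
    (p₀ p₁ p₂ p₃ : ℝ)
    (h₀ : p₀ ∈ Set.Icc (0 : ℝ) 1) (h₁ : p₁ ∈ Set.Icc (0 : ℝ) 1)
    (h₂ : p₂ ∈ Set.Icc (0 : ℝ) 1) (h₃ : p₃ ∈ Set.Icc (0 : ℝ) 1)
    (K : ℕ) (hK : 1 ≤ K) (f : (ℤ → Bool) → ℝ)
    (hf : ∀ η ζ : ℤ → Bool, (∀ x : ℤ, |x| ≤ (K : ℤ) → η x = ζ x) → f η = f ζ)
    (N : ℕ) (hN : 2 * K + 4 ≤ N) (η : ℤ → Bool) :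
    γ * OmegaNA N (psiN N f) η + (1 - γ) * OmegaNB p₀ p₁ p₂ p₃ N (psiN N f) η =
      psiN N (fun ζ => γ * OmegaA f ζ + (1 - γ) * OmegaB p₀ p₁ p₂ p₃ f ζ) η := by
  have hN1 : 1 ≤ N := by omega
  have hNc : (2*(K:ℤ)+4) ≤ (N:ℤ) := by exact_mod_cast hN
  have hKc : (1:ℤ) ≤ (K:ℤ) := by exact_mod_cast hK
  have hl : lN N ≤ -(K:ℤ) - 2 := by simp only [lN]; omega
  have hr : (K:ℤ) + 1 ≤ rN N := by simp only [rN]; omega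
  have hlen := len_eq N hN1
  set ξ := extendCfg N η with hxidef
  have hxi : ∀ z, lN N ≤ z → z ≤ rN N → ξ z = η z := by
    intro z h1 h2; simp [hxidef, extendCfg, h1, h2]
  have hpsi : psiN N f η = f ξ := rfl
  -- f does not see far-away flips
  have hfar_flip : ∀ (ζ : ℤ → Bool) (x : ℤ), ¬|x| ≤ (K:ℤ) → f (flipAt ζ x) = f ζ := by
    intro ζ x hx
    refine hf _ _ fun y hy => ?_
    rw [flipAt_apply, if_neg]; rintro rfl; exact hx hy
  have hfar_swap : ∀ (ζ : ℤ → Bool) (x : ℤ), x < -(K:ℤ)-1 ∨ (K:ℤ) < x →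
      f (swapAt ζ x) = f ζ := by
    intro ζ x hx
    refine hf _ _ fun y hy => ?_
    rw [abs_le] at hy
    rw [swapAt, upd2_apply, if_neg (by omega), if_neg (by omega)]
  -- commuting flips through psiN
  have hflip_comm : ∀ x, lN N ≤ x → x ≤ rN N →
      psiN N f (flipAt η x) = f (flipAt ξ x) := by
    intro x h1 h2
    refine hf _ _ fun y hy => ?_
    rw [abs_le] at hy
    have hy1 : lN N ≤ y := by omega
    have hy2 : y ≤ rN N := by omega
    simp only [extendCfg, flipAt_apply, if_pos (And.intro hy1 hy2)]
    rw [hxi x h1 h2, hxi y hy1 hy2]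
  have hflip_far : ∀ x, lN N ≤ x → x ≤ rN N → ¬|x| ≤ (K:ℤ) →
      psiN N f (flipAt η x) = psiN N f η := by
    intro x h1 h2 hx
    refine hf _ _ fun y hy => ?_
    have hne : y ≠ x := by rintro rfl; exact hx hy
    simp only [extendCfg, flipAt_apply, if_neg hne]
  have hswap_comm : ∀ x : ℤ, -(K:ℤ)-1 ≤ x → x ≤ (K:ℤ) →
      psiN N f (Function.update (Function.update η x (η (x+1))) (x+1) (η x))
        = f (swapAt ξ x) := by
    intro x h1 h2
    refine hf _ _ fun y hy => ?_
    rw [abs_le] at hy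
    have hy1 : lN N ≤ y := by omega
    have hy2 : y ≤ rN N := by omega
    simp only [extendCfg, swapAt, upd2_apply, if_pos (And.intro hy1 hy2)]
    rw [hxi x (by omega) (by omega), hxi (x+1) (by omega) (by omega), hxi y hy1 hy2]
  have hswap_far : ∀ x x' : ℤ, ¬|x| ≤ (K:ℤ) → ¬|x'| ≤ (K:ℤ) →
      psiN N f (Function.update (Function.update η x (η x')) x' (η x)) = psiN N f η := by
    intro x x' hx hx'
    refine hf _ _ fun y hy => ?_
    have e1 : y ≠ x' := by rintro rfl; exact hx' hy
    have e2 : y ≠ x := by rintro rfl; exact hx hy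
    simp only [extendCfg, upd2_apply, if_neg e1, if_neg e2]
  -- ==================== Part B ====================
  have hBeq : OmegaNB p₀ p₁ p₂ p₃ N (psiN N f) η = OmegaB p₀ p₁ p₂ p₃ f ξ := by
    have hsub : Finset.Icc (-(K:ℤ)) (K:ℤ) ⊆ Finset.Icc (lN N) (rN N) := by
      intro x hx; simp only [Finset.mem_Icc] at *; omega
    have hv1 : ∀ x ∉ Finset.Icc (-(K:ℤ)) (K:ℤ),
        cB p₀ p₁ p₂ p₃ x ξ * (f (flipAt ξ x) - f ξ) = 0 := by
      intro x hx
      simp only [Finset.mem_Icc, not_and_or, not_le] at hx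
      rw [hfar_flip ξ x (by rw [abs_le]; omega)]; ring
    have hv2 : ∀ x ∈ Finset.Icc (lN N) (rN N), x ∉ Finset.Icc (-(K:ℤ)) (K:ℤ) →
        cBN p₀ p₁ p₂ p₃ N x η * (psiN N f (flipAt η x) - psiN N f η) = 0 := by
      intro x hx hx'
      simp only [Finset.mem_Icc] at hx
      simp only [Finset.mem_Icc, not_and_or, not_le] at hx'
      rw [hflip_far x hx.1 hx.2 (by rw [abs_le]; omega)]; ring
    rw [OmegaNB, OmegaB, tsum_eq_sum hv1, ← Finset.sum_subset hsub hv2]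
    refine Finset.sum_congr rfl fun x hx => ?_
    simp only [Finset.mem_Icc] at hx
    have h1 : lN N ≤ x := by omega
    have h2 : x ≤ rN N := by omega
    have hxm1 : wrap N (x-1) = x - 1 := wrap_eq_self N hN1 _ (by omega) (by omega)
    have hxp1 : wrap N (x+1) = x + 1 := wrap_eq_self N hN1 _ (by omega) (by omega)
    rw [hflip_comm x h1 h2, hpsi]
    simp only [cBN, cB, hxm1, hxp1, hxi x h1 h2,
      hxi (x-1) (by omega) (by omega), hxi (x+1) (by omega) (by omega)]
  -- ==================== Part A ====================
  have hAeq : OmegaNA N (psiN N f) η = OmegaA f ξ := by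
    have hne : ∀ x, lN N ≤ x → x ≤ rN N → x ≠ wrap N (x+1) := by
      intro x h1 h2 hcon
      have hw : wrap N x = x := wrap_eq_self N hN1 x h1 h2
      have h3 : (x + 1 - lN N) % (N:ℤ) = (x - lN N) % (N:ℤ) := by
        unfold wrap at hcon hw; omega
      have h4 : ((x + 1 - lN N) - (x - lN N)) % (N:ℤ) = 0 := by
        rw [Int.sub_emod, h3]; simp
      rw [show (x + 1 - lN N) - (x - lN N) = 1 by ring] at h4
      rw [Int.emod_eq_of_lt (by norm_num) (by omega)] at h4
      norm_num at h4
    -- Step 1: pairing the discrete sum into bond terms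
    have step1 : OmegaNA N (psiN N f) η
        = ∑ x ∈ Finset.Icc (lN N) (rN N), Bterm N (psiN N f) η x := by
      rw [OmegaNA]
      have hsplit : ∀ x ∈ Finset.Icc (lN N) (rN N),
          (1/2) * psiN N f (stepDown N η x) + (1/2) * psiN N f (stepUp N η x) - psiN N f η
          = ((1/2) * psiN N f (stepUp N η x) - (1/2) * psiN N f η)
            + ((1/2) * psiN N f (stepDown N η x) - (1/2) * psiN N f η) := by
        intro x _; ring
      rw [Finset.sum_congr rfl hsplit, Finset.sum_add_distrib]
      have hre : ∑ x ∈ Finset.Icc (lN N) (rN N),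
            ((1/2) * psiN N f (stepDown N η x) - (1/2) * psiN N f η)
          = ∑ x ∈ Finset.Icc (lN N) (rN N),
            ((1/2) * psiN N f (stepDown N η (wrap N (x+1))) - (1/2) * psiN N f η) := by
        refine Finset.sum_nbij' (fun x => wrap N (x - 1)) (fun x => wrap N (x + 1))
          (fun a _ => Finset.mem_Icc.mpr (wrap_mem N hN1 _))
          (fun a _ => Finset.mem_Icc.mpr (wrap_mem N hN1 _)) ?_ ?_ ?_
        · intro a ha; simp only [Finset.mem_Icc] at ha
          show wrap N (wrap N (a - 1) + 1) = a
          rw [wrap_wrap_add, show a - 1 + 1 = a by ring, wrap_eq_self N hN1 a ha.1 ha.2]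
        · intro a ha; simp only [Finset.mem_Icc] at ha
          show wrap N (wrap N (a + 1) - 1) = a
          rw [sub_eq_add_neg, wrap_wrap_add, show a + 1 + -1 = a by ring,
            wrap_eq_self N hN1 a ha.1 ha.2]
        · intro a ha; simp only [Finset.mem_Icc] at ha
          show (1/2) * psiN N f (stepDown N η a) - (1/2) * psiN N f η
              = (1/2) * psiN N f (stepDown N η (wrap N (wrap N (a - 1) + 1)))
                - (1/2) * psiN N f η
          rw [wrap_wrap_add, show a - 1 + 1 = a by ring, wrap_eq_self N hN1 a ha.1 ha.2]
      rw [hre, ← Finset.sum_add_distrib]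
      refine Finset.sum_congr rfl fun x hx => ?_
      simp only [Finset.mem_Icc] at hx
      have hww : wrap N (wrap N (x+1) - 1) = x := by
        rw [sub_eq_add_neg, wrap_wrap_add, show x + 1 + -1 = x by ring,
          wrap_eq_self N hN1 x hx.1 hx.2]
      have hsp := step_pair (psiN N f) η x (wrap N (x+1)) (hne x hx.1 hx.2)
      simp only [stepUp, stepDown, hww, Bterm]
      linarith [hsp]
    -- Step 2: restrict to the window
    have hsub2 : Finset.Icc (-(K:ℤ)-1) (K:ℤ) ⊆ Finset.Icc (lN N) (rN N) := by
      intro x hx; simp only [Finset.mem_Icc] at *; omega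
    have hvanish : ∀ x ∈ Finset.Icc (lN N) (rN N), x ∉ Finset.Icc (-(K:ℤ)-1) (K:ℤ) →
        Bterm N (psiN N f) η x = 0 := by
      intro x hx hx'
      simp only [Finset.mem_Icc] at hx
      simp only [Finset.mem_Icc, not_and_or, not_le] at hx'
      have hx1 : ¬|x| ≤ (K:ℤ) := by rw [abs_le]; omega
      have hxw := wrap_mem N hN1 (x+1)
      have hx2 : ¬|wrap N (x+1)| ≤ (K:ℤ) := by
        rcases eq_or_ne x (rN N) with hc | hc
        · rw [hc, wrap_rN N hN1, abs_le]; omega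
        · rw [wrap_eq_self N hN1 (x+1) (by omega) (by omega), abs_le]; omega
      rw [Bterm, hflip_far x hx.1 hx.2 hx1, hflip_far _ hxw.1 hxw.2 hx2,
        hswap_far x _ hx1 hx2]
      split_ifs <;> ring
    have step2 : ∑ x ∈ Finset.Icc (lN N) (rN N), Bterm N (psiN N f) η x
        = ∑ x ∈ Finset.Icc (-(K:ℤ)-1) (K:ℤ), Bterm N (psiN N f) η x :=
      (Finset.sum_subset hsub2 hvanish).symm
    -- Step 3: identify with continuum bond terms
    have step3 : ∀ x ∈ Finset.Icc (-(K:ℤ)-1) (K:ℤ),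
        Bterm N (psiN N f) η x = Cterm f ξ x := by
      intro x hx
      simp only [Finset.mem_Icc] at hx
      have hw : wrap N (x+1) = x+1 := wrap_eq_self N hN1 _ (by omega) (by omega)
      rw [Bterm, Cterm, hw, hflip_comm x (by omega) (by omega),
        hflip_comm (x+1) (by omega) (by omega), hswap_comm x hx.1 hx.2, hpsi,
        hxi x (by omega) (by omega), hxi (x+1) (by omega) (by omega)]
    -- Step 4: continuum generator equals sum of bond terms
    have hsum2 : (∑' x : ℤ, (f (swapAt ξ x) - f ξ))
        = ∑ x ∈ Finset.Icc (-(K:ℤ)-1) (K:ℤ), (f (swapAt ξ x) - f ξ) := by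
      refine tsum_eq_sum fun x hx => ?_
      simp only [Finset.mem_Icc, not_and_or, not_le] at hx
      rw [hfar_swap ξ x (by omega)]; ring
    have hsum1 : (∑' x : ℤ, cA x ξ * (f (flipAt ξ x) - f ξ))
        = ∑ x ∈ Finset.Icc (-(K:ℤ)-1) (K:ℤ), cA x ξ * (f (flipAt ξ x) - f ξ) := by
      refine tsum_eq_sum fun x hx => ?_
      simp only [Finset.mem_Icc, not_and_or, not_le] at hx
      rw [hfar_flip ξ x (by rw [abs_le]; omega)]; ring
    have hshift : ∑ x ∈ Finset.Icc (-(K:ℤ)-1) (K:ℤ),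
          (1/2) * (if ξ x = ξ (x-1) then (1:ℝ) else 0) * (f (flipAt ξ x) - f ξ)
        = ∑ x ∈ Finset.Icc (-(K:ℤ)-1) (K:ℤ),
          (1/2) * (if ξ x = ξ (x+1) then (1:ℝ) else 0) * (f (flipAt ξ (x+1)) - f ξ) := by
      have h1 : ∑ x ∈ Finset.Icc (-(K:ℤ)-1) (K:ℤ),
            (1/2) * (if ξ x = ξ (x-1) then (1:ℝ) else 0) * (f (flipAt ξ x) - f ξ)
          = ∑ x ∈ Finset.Icc (-(K:ℤ)-2) ((K:ℤ)-1),
            (1/2) * (if ξ x = ξ (x+1) then (1:ℝ) else 0) * (f (flipAt ξ (x+1)) - f ξ) := by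
        refine Finset.sum_nbij' (fun x => x - 1) (fun x => x + 1) ?_ ?_ ?_ ?_ ?_
        · intro a ha; simp only [Finset.mem_Icc] at *; omega
        · intro a ha; simp only [Finset.mem_Icc] at *; omega
        · intro a _; show a - 1 + 1 = a; ring
        · intro a _; show a + 1 - 1 = a; ring
        · intro a _
          show (1/2) * (if ξ a = ξ (a-1) then (1:ℝ) else 0) * (f (flipAt ξ a) - f ξ)
            = (1/2) * (if ξ (a-1) = ξ (a-1+1) then (1:ℝ) else 0)
                * (f (flipAt ξ (a-1+1)) - f ξ)
          rw [show a - 1 + 1 = a by ring]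
          by_cases h : ξ a = ξ (a-1)
          · rw [if_pos h, if_pos h.symm]
          · rw [if_neg h, if_neg fun hh => h hh.symm]
      rw [h1]
      have hz1 : ∀ x ∈ Finset.Icc (-(K:ℤ)-2) (K:ℤ), x ∉ Finset.Icc (-(K:ℤ)-2) ((K:ℤ)-1) →
          (1/2) * (if ξ x = ξ (x+1) then (1:ℝ) else 0) * (f (flipAt ξ (x+1)) - f ξ) = 0 := by
        intro x hx hx'
        simp only [Finset.mem_Icc] at hx
        simp only [Finset.mem_Icc, not_and_or, not_le] at hx'
        rw [hfar_flip ξ (x+1) (by rw [abs_le]; omega)]; ring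
      have hz2 : ∀ x ∈ Finset.Icc (-(K:ℤ)-2) (K:ℤ), x ∉ Finset.Icc (-(K:ℤ)-1) (K:ℤ) →
          (1/2) * (if ξ x = ξ (x+1) then (1:ℝ) else 0) * (f (flipAt ξ (x+1)) - f ξ) = 0 := by
        intro x hx hx'
        simp only [Finset.mem_Icc] at hx
        simp only [Finset.mem_Icc, not_and_or, not_le] at hx'
        rw [hfar_flip ξ (x+1) (by rw [abs_le]; omega)]; ring
      rw [Finset.sum_subset (by intro x hx; simp only [Finset.mem_Icc] at *; omega) hz1,
        ← Finset.sum_subset (by intro x hx; simp only [Finset.mem_Icc] at *; omega) hz2]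
    have step4 : OmegaA f ξ = ∑ x ∈ Finset.Icc (-(K:ℤ)-1) (K:ℤ), Cterm f ξ x := by
      rw [OmegaA, hsum1, hsum2, Finset.mul_sum]
      have e1 : ∑ x ∈ Finset.Icc (-(K:ℤ)-1) (K:ℤ), cA x ξ * (f (flipAt ξ x) - f ξ)
          = (∑ x ∈ Finset.Icc (-(K:ℤ)-1) (K:ℤ),
              (1/2) * (if ξ x = ξ (x+1) then (1:ℝ) else 0) * (f (flipAt ξ x) - f ξ))
            + ∑ x ∈ Finset.Icc (-(K:ℤ)-1) (K:ℤ),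
              (1/2) * (if ξ x = ξ (x-1) then (1:ℝ) else 0) * (f (flipAt ξ x) - f ξ) := by
        rw [← Finset.sum_add_distrib]
        exact Finset.sum_congr rfl fun x _ => by rw [cA]; ring
      rw [e1, hshift, ← Finset.sum_add_distrib, ← Finset.sum_add_distrib]
      refine Finset.sum_congr rfl fun x hx => ?_
      rw [Cterm]
      split_ifs with h <;> ring
    rw [step1, step2, Finset.sum_congr rfl step3, ← step4]
  -- ==================== conclusion ====================
  show _ = γ * OmegaA f ξ + (1 - γ) * OmegaB p₀ p₁ p₂ p₃ f ξ
  rw [hAeq, hBeq]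
end
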